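/- arXiv:2203.12413 — 7 statements merged into one kernel-verified Lean document; each statement's English description precedes it below -/
import Mathlib

section
/- (Holant theorem.) Let a factor graph be given. Suppose that for every edge (i,a) ∈ E a finite set Y_{i,a} with |Y_{i,a}| = |X_i| is given, together with real matrices φ_{i,a} ∈ ℝ^{X_i×Y_{i,a}} and φ̂_{i,a} ∈ ℝ^{Y_{i,a}×X_i} that are two-sided inverses of each other (∑_{y∈Y_{i,a}} φ_{i,a}(x,y)·φ̂_{i,a}(y,x') = δ_{x,x'} for all x,x' ∈ X_i, and ∑_{x∈X_i} φ̂_{i,a}(y,x)·φ_{i,a}(x,y') = δ_{y,y'} for all y,y' ∈ Y_{i,a}). Define f̂_a(y_{∂a,a}) := ∑_{x_{∂a}} f_a(x_{∂a})·∏_{i∈∂a} φ̂_{i,a}(y_{i,a}, x_i) for y_{∂a,a} ∈ ∏_{i∈∂a} Y_{i,a}, and ĥ_i(y_{i,∂i}) := ∑_{x_i∈X_i} ∏_{a∈∂i} φ_{i,a}(x_i, y_{i,a}) for y_{i,∂i} ∈ ∏_{a∈∂i} Y_{i,a}. Then the partition sum satisfies Z = ∑_{y ∈ ∏_{(i,a)∈E}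 Y_{i,a}} ∏_{a∈F} f̂_a(y_{∂a,a}) · ∏_{i∈V} ĥ_i(y_{i,∂i}). -/
/-!
Expand every product of sums in the Holant expression and sum out the edge labels first. The
labels of different edges are independent, so each edge `(i, a)` contributes the matrix product
`(φ_{i,a} φ̂_{i,a})(x_i, s_i)` linking the value `x_i` of the variable to the argument `s_i` of
`f_a`. This product is the identity matrix, so only the local configuration `s = x_{∂a}`
survives in each factor, which leaves `Z`.
-/

open Finset

namespace FactorGraph

variable {V F : Type} (E : Finset (V × F))

def edgeEquivSigmaFactor : (Σ a : F, {j : V // (j, a) ∈ E}) ≃ {p : V × F // p ∈ E} where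
  toFun x := ⟨(x.2.1, x.1), x.2.2⟩
  invFun e := ⟨e.1.2, e.1.1, e.2⟩
  left_inv _ := rfl
  right_inv _ := rfl

def edgeEquivSigmaVar : (Σ i : V, {c : F // (i, c) ∈ E}) ≃ {p : V × F // p ∈ E} where
  toFun x := ⟨(x.1, x.2.1), x.2.2⟩
  invFun e := ⟨e.1.1, e.1.2, e.2⟩
  left_inv _ := rfl
  right_inv _ := rfl

variable [Fintype V] [Fintype F] [DecidableEq V] [DecidableEq F]

theorem prod_factor_prod_nbhd {M : Type*} [CommMonoid M] (g : {p : V × F // p ∈ E} → M) :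
    ∏ a : F, ∏ j : {j : V // (j, a) ∈ E}, g ⟨(j.1, a), j.2⟩ = ∏ e, g e := by
  rw [← Fintype.prod_sigma' (fun a (j : {j : V // (j, a) ∈ E}) => g ⟨(j.1, a), j.2⟩)]
  exact Fintype.prod_equiv (edgeEquivSigmaFactor E) _ _ fun _ => rfl

theorem prod_var_prod_nbhd {M : Type*} [CommMonoid M] (g : {p : V × F // p ∈ E} → M) :
    ∏ i : V, ∏ c : {c : F // (i, c) ∈ E}, g ⟨(i, c.1), c.2⟩ = ∏ e, g e := by
  rw [← Fintype.prod_sigma' (fun i (c : {c : F // (i, c) ∈ E}) => g ⟨(i, c.1), c.2⟩)]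
  exact Fintype.prod_equiv (edgeEquivSigmaVar E) _ _ fun _ => rfl

theorem sum_labelings_prod_mul_prod_eq_prod_sum {R : Type*} [CommSemiring R]
    {Y : {p : V × F // p ∈ E} → Type} [∀ e, Fintype (Y e)] (A B : ∀ e, Y e → R) :
    ∑ y : ∀ e, Y e, (∏ a : F, ∏ j : {j : V // (j, a) ∈ E}, A _ (y ⟨(j.1, a), j.2⟩))
        * ∏ i : V, ∏ c : {c : F // (i, c) ∈ E}, B _ (y ⟨(i, c.1), c.2⟩)
      = ∏ e, ∑ y, A e y * B e y := by
  rw [Fintype.prod_sum]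
  refine sum_congr rfl fun y _ => ?_
  rw [prod_factor_prod_nbhd E (fun e => A e (y e)), prod_var_prod_nbhd E (fun e => B e (y e)),
    prod_mul_distrib]

theorem sum_mul_prod_ite_eq {ι : Type*} [Fintype ι] [DecidableEq ι] {X : ι → Type*}
    [∀ i, Fintype (X i)] [∀ i, DecidableEq (X i)] {R : Type*} [CommSemiring R]
    (f : (∀ i, X i) → R) (x : ∀ i, X i) :
    ∑ s, f s * ∏ i, (if x i = s i then 1 else 0 : R) = f x := by
  simp_rw [Fintype.prod_boole, ← funext_iff, mul_ite, mul_one, mul_zero, sum_ite_eq, mem_univ,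
    if_true]

theorem holant_sum_eq_sum_prod_kernel {X : V → Type} [∀ i, Fintype (X i)]
    {R : Type*} [CommSemiring R] (f : ∀ a : F, (∀ j : {j : V // (j, a) ∈ E}, X j.1) → R)
    {Y : V → F → Type} [∀ i a, Fintype (Y i a)]
    (φ : ∀ (i : V) (a : F), X i → Y i a → R) (φh : ∀ (i : V) (a : F), Y i a → X i → R) :
    ∑ yy : ∀ e : {p : V × F // p ∈ E}, Y e.1.1 e.1.2,
        (∏ a : F,
          ∑ s : ∀ j : {j : V // (j, a) ∈ E}, X j.1,
            f a s * ∏ j : {j : V // (j, a) ∈ E}, φh j.1 a (yy ⟨(j.1, a), j.2⟩) (s j))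
        * ∏ i : V,
            ∑ xi : X i, ∏ c : {c : F // (i, c) ∈ E}, φ i c.1 xi (yy ⟨(i, c.1), c.2⟩)
      = ∑ x : ∀ i : V, X i, ∏ a : F,
          ∑ s : ∀ j : {j : V // (j, a) ∈ E}, X j.1,
            f a s * ∏ j : {j : V // (j, a) ∈ E},
              ∑ y : Y j.1 a, φ j.1 a (x j.1) y * φh j.1 a y (s j) := by
  conv_lhs => simp only [Fintype.prod_sum, sum_mul_sum, prod_mul_distrib, mul_assoc]
  conv_rhs =>
    simp only [prod_mul_distrib,
      Fintype.prod_sum (R := R) (κ := fun a => ∀ j : {j : V // (j, a) ∈ E}, X j.1)]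
  -- move the sum over the edge labels `yy` innermost
  rw [Finset.sum_comm, Finset.sum_comm (s := univ (α := ∀ i, X i))]
  refine sum_congr rfl fun S _ => ?_
  rw [Finset.sum_comm]
  refine sum_congr rfl fun x _ => ?_
  rw [← mul_sum, sum_labelings_prod_mul_prod_eq_prod_sum E
    (fun e y => φh e.1.1 e.1.2 y (S e.1.2 ⟨e.1.1, e.2⟩)) (fun e y => φ e.1.1 e.1.2 (x e.1.1) y),
    ← prod_factor_prod_nbhd E]
  simp only [mul_comm (φh _ _ _ _)]

end FactorGraph

theorem stmt3_general {V F : Type} [Fintype V] [Fintype F] [DecidableEq V] [DecidableEq F]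
    (E : Finset (V × F)) (X : V → Type)
    [∀ i, Fintype (X i)] [∀ i, DecidableEq (X i)]
    (f : ∀ a : F, (∀ j : {j : V // (j, a) ∈ E}, X j.1) → ℝ)
    (Y : V → F → Type) [∀ i a, Fintype (Y i a)]
    (φ : ∀ (i : V) (a : F), X i → Y i a → ℝ)
    (φh : ∀ (i : V) (a : F), Y i a → X i → ℝ)
    (hinv₁ : ∀ (i : V) (a : F), (i, a) ∈ E → ∀ x x' : X i,
      ∑ y : Y i a, φ i a x y * φh i a y x' = if x = x' then 1 else 0) :
    ∑ x : ∀ i : V, X i, ∏ a : F, f a (fun j => x j.1)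
      = ∑ yy : ∀ e : {p : V × F // p ∈ E}, Y e.1.1 e.1.2,
          (∏ a : F,
            ∑ s : ∀ j : {j : V // (j, a) ∈ E}, X j.1,
              f a s * ∏ j : {j : V // (j, a) ∈ E}, φh j.1 a (yy ⟨(j.1, a), j.2⟩) (s j))
          * ∏ i : V,
              ∑ xi : X i, ∏ c : {c : F // (i, c) ∈ E}, φ i c.1 xi (yy ⟨(i, c.1), c.2⟩) := by
  rw [FactorGraph.holant_sum_eq_sum_prod_kernel E f φ φh]
  refine sum_congr rfl fun x _ => prod_congr rfl fun a _ => ?_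
  rw [← FactorGraph.sum_mul_prod_ite_eq (f a) (fun j => x j.1)]
  refine sum_congr rfl fun s _ => congrArg (f a s * ·) (prod_congr rfl fun j _ => ?_)
  exact (hinv₁ j.1 a j.2 _ _).symm

/-- Holant theorem: given, for every edge `(i,a)` of a factor graph, a finite set `Y i a`
with `|Y i a| = |X i|` together with mutually inverse matrices
`φ i a : X i × Y i a → ℝ` and `φh i a : Y i a × X i → ℝ`, the partition sum can be
computed from the transformed local functions `f̂_a` and the new vertex functions `ĥ_i`. -/
theorem stmt3 {V F : Type} [Fintype V] [Fintype F] [DecidableEq V] [DecidableEq F]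
    (E : Finset (V × F)) (X : V → Type)
    [∀ i, Fintype (X i)] [∀ i, DecidableEq (X i)] [∀ i, Nonempty (X i)]
    (f : ∀ a : F, (∀ j : {j : V // (j, a) ∈ E}, X j.1) → ℝ)
    (Y : V → F → Type) [∀ i a, Fintype (Y i a)] [∀ i a, DecidableEq (Y i a)]
    (φ : ∀ (i : V) (a : F), X i → Y i a → ℝ)
    (φh : ∀ (i : V) (a : F), Y i a → X i → ℝ)
    (hcard : ∀ (i : V) (a : F), (i, a) ∈ E → Fintype.card (Y i a) = Fintype.card (X i))
    (hinv₁ : ∀ (i : V) (a : F), (i, a) ∈ E → ∀ x x' : X i,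
      ∑ y : Y i a, φ i a x y * φh i a y x' = if x = x' then 1 else 0)
    (hinv₂ : ∀ (i : V) (a : F), (i, a) ∈ E → ∀ y y' : Y i a,
      ∑ x : X i, φh i a y x * φ i a x y' = if y = y' then 1 else 0) :
    ∑ x : ∀ i : V, X i, ∏ a : F, f a (fun j => x j.1)
      = ∑ yy : ∀ e : {p : V × F // p ∈ E}, Y e.1.1 e.1.2,
          (∏ a : F,
            ∑ s : ∀ j : {j : V // (j, a) ∈ E}, X j.1,
              f a s * ∏ j : {j : V // (j, a) ∈ E}, φh j.1 a (yy ⟨(j.1, a), j.2⟩) (s j))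
          * ∏ i : V,
              ∑ xi : X i, ∏ c : {c : F // (i, c) ∈ E}, φ i c.1 xi (yy ⟨(i, c.1), c.2⟩) :=
  stmt3_general E X f Y φ φh hinv₁
end

section
/- Let a factor graph have nonnegative local functions f_a ≥ 0, none identically zero. Let {m_{i→a}, m_{a→i} : X_i → ℝ_{>0}}_{(i,a)∈E} be strictly positive messages forming a BP fixed point: for every (i,a) ∈ E there exist constants γ_{i,a} > 0 and δ_{i,a} > 0 with m_{i→a}(x_i) = γ_{i,a}·∏_{c∈∂i∖{a}} m_{c→i}(x_i) and m_{a→i}(x_i) = δ_{i,a}·∑_{x_{∂a∖{i}}} f_a(x_{∂a})·∏_{j∈∂a∖{i}} m_{j→a}(x_j) for all x_i ∈ X_i. Define Z_a := ∑_{x_{∂a}} f_a(x_{∂a})·∏_{i∈∂a} m_{i→a}(x_i), Z_i := ∑_{x_i} ∏_{a∈∂i} m_{a→i}(x_i), Z_{i,a} := ∑_{x_i} m_{i→a}(x_i)·m_{a→i}(x_i), and the beliefs b_a(x_{∂a}) := f_a(x_{∂a})·∏_{i∈∂a} m_{i→a}(x_i)/Z_a and b_i(x_i) := ∏_{a∈∂i}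 m_{a→i}(x_i)/Z_i. Then the Bethe partition sum satisfies exp(−F_B({b_a},{b_i})) = (∏_{a∈F} Z_a · ∏_{i∈V} Z_i) / ∏_{(i,a)∈E} Z_{i,a}. -/
/-! At a BP fixed point the beliefs are locally consistent: for every edge `(i, a)` the marginal
of `b_a` at `x_i` is `b_i(x_i) = m_{i→a}(x_i) m_{a→i}(x_i) / Z_{i,a}`. Since
`log b_a = log f_a + ∑_{i ∈ ∂a} log m_{i→a} - log Z_a`, the factor terms of `F_B` turn into edge
terms `∑_{x_i} b_i log m_{i→a}` minus `log Z_a`. Regrouped by variable, the edge formula for `b_i`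
together with `log b_i = ∑_{a ∈ ∂i} log m_{a→i} - log Z_i` makes them cancel the `(d_i - 1)`
entropy terms, leaving `F_B = ∑_{(i,a)} log Z_{i,a} - ∑_a log Z_a - ∑_i log Z_i`. -/

open Finset

open Classical in
/-- The Bethe free energy of a factor graph at a family of local beliefs
`{b_a}_{a∈F}, {b_i}_{i∈V}`, valued in `ℝ ∪ {+∞}` (with the conventions of the text);
here `d_i = |∂i|`. -/
noncomputable def betheFE {V F : Type} [Fintype V] [Fintype F] [DecidableEq V] [DecidableEq F]
    (E : Finset (V × F)) (X : V → Type) [∀ i, Fintype (X i)] [∀ i, DecidableEq (X i)]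
    (f : ∀ a : F, (∀ j : {j : V // (j, a) ∈ E}, X j.1) → ℝ)
    (bF : ∀ a : F, (∀ j : {j : V // (j, a) ∈ E}, X j.1) → ℝ)
    (bV : ∀ i : V, X i → ℝ) : EReal :=
  if ∃ (a : F) (s : ∀ j : {j : V // (j, a) ∈ E}, X j.1), 0 < bF a s ∧ f a s = 0 then ⊤
  else
    ((- ∑ a : F, ∑ s : ∀ j : {j : V // (j, a) ∈ E}, X j.1, bF a s * Real.log (f a s)
        + ∑ a : F, ∑ s : ∀ j : {j : V // (j, a) ∈ E}, X j.1, bF a s * Real.log (bF a s)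
        - ∑ i : V, ((Fintype.card {c : F // (i, c) ∈ E} : ℝ) - 1)
            * ∑ xi : X i, bV i xi * Real.log (bV i xi) : ℝ) : EReal)

open Real

theorem prod_eq_mul_prod_filter_val_ne {α M : Type*} [CommMonoid M] [DecidableEq α]
    {p : α → Prop} [Fintype {a // p a}] (g : {a // p a} → M) {a : α} (ha : p a) :
    ∏ c, g c = g ⟨a, ha⟩ * ∏ c ∈ univ.filter (fun c : {a // p a} => (c : α) ≠ a), g c := by
  rw [← mul_prod_erase univ g (mem_univ ⟨a, ha⟩)]
  congr 2
  ext c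
  simp [Subtype.ext_iff]

theorem sum_eq_one_of_eq_div {ι : Type*} [Fintype ι] {b g : ι → ℝ} {Z : ℝ}
    (hb : ∀ x, b x = g x / Z) (hZ : Z = ∑ x, g x) (hZ0 : Z ≠ 0) : ∑ x, b x = 1 := by
  simp_rw [hb, ← sum_div, ← hZ, div_self hZ0]

theorem sum_mul_log_of_eq_div {ι : Type*} [Fintype ι] {b g : ι → ℝ} {Z : ℝ}
    (hb : ∀ x, b x = g x / Z) (hZ : Z = ∑ x, g x) (hZ0 : Z ≠ 0) :
    ∑ x, b x * log (b x) = ∑ x, b x * log (g x) - log Z := by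
  have hpoint : ∀ x, b x * log (b x) = b x * log (g x) - b x * log Z := by
    intro x
    by_cases hg : g x = 0
    · simp [hb x, hg]
    · rw [hb x, log_div hg hZ0]
      ring
  rw [sum_congr rfl fun x _ => hpoint x, sum_sub_distrib, ← sum_mul,
    sum_eq_one_of_eq_div hb hZ hZ0, one_mul]

theorem sum_mul_comp_eq_sum_fiber_mul {α β R : Type*} [Fintype α] [Fintype β] [DecidableEq β]
    [NonUnitalNonAssocSemiring R] (b : α → R) (proj : α → β) (h : β → R) :
    ∑ s, b s * h (proj s) = ∑ y, (∑ s ∈ univ.filter (fun s => proj s = y), b s) * h y := by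
  rw [← sum_fiberwise univ proj]
  refine sum_congr rfl fun y _ => ?_
  rw [sum_mul]
  exact sum_congr rfl fun s hs => by rw [(mem_filter.mp hs).2]

theorem sum_mem_eq_sum_sum_fst {α β M : Type*} [AddCommMonoid M] [Fintype α]
    (E : Finset (α × β)) [∀ a, Fintype {b // (a, b) ∈ E}] (g : {p // p ∈ E} → M) :
    ∑ e, g e = ∑ a, ∑ b : {b // (a, b) ∈ E}, g ⟨(a, b), b.2⟩ := by
  let e : {p // p ∈ E} ≃ Σ a, {b // (a, b) ∈ E} :=
    Equiv.subtypeProdEquivSigmaSubtype fun a b => (a, b) ∈ E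
  exact (Fintype.sum_equiv e g (fun x => g (e.symm x)) fun _ => rfl).trans (Fintype.sum_sigma _)

theorem sum_mem_eq_sum_sum_snd {α β M : Type*} [AddCommMonoid M] [Fintype β]
    (E : Finset (α × β)) [∀ b, Fintype {a // (a, b) ∈ E}] (g : {p // p ∈ E} → M) :
    ∑ e, g e = ∑ b, ∑ a : {a // (a, b) ∈ E}, g ⟨(a, b), a.2⟩ := by
  let e : {p // p ∈ E} ≃ Σ b, {a // (a, b) ∈ E} :=
    { toFun := fun e => ⟨e.1.2, e.1.1, e.2⟩
      invFun := fun x => ⟨(x.2.1, x.1), x.2.2⟩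
      left_inv := fun _ => rfl
      right_inv := fun _ => rfl }
  exact (Fintype.sum_equiv e g (fun x => g (e.symm x)) fun _ => rfl).trans (Fintype.sum_sigma _)

theorem exp_sum_log {ι : Type*} [Fintype ι] {g : ι → ℝ} (hg : ∀ x, 0 < g x) :
    exp (∑ x, log (g x)) = ∏ x, g x := by
  rw [exp_sum]
  exact prod_congr rfl fun x _ => exp_log (hg x)

namespace BeliefPropagation

variable {V F : Type} {E : Finset (V × F)} {X : V → Type} [∀ i, Fintype (X i)]

theorem zia_pos [∀ i, Nonempty (X i)] {mv mf : ∀ (i : V) (a : F), (i, a) ∈ E → X i → ℝ}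
    (hmv : ∀ i a h xi, 0 < mv i a h xi) (hmf : ∀ i a h xi, 0 < mf i a h xi)
    {Zia : ∀ (i : V) (a : F), (i, a) ∈ E → ℝ}
    (hZia : ∀ (i : V) (a : F) (h : (i, a) ∈ E),
      Zia i a h = ∑ xi : X i, mv i a h xi * mf i a h xi)
    (i : V) (a : F) (h : (i, a) ∈ E) : 0 < Zia i a h := by
  rw [hZia i a h]
  exact sum_pos (fun x _ => mul_pos (hmv ..) (hmf ..)) univ_nonempty

variable [DecidableEq V] [DecidableEq F]

theorem za_pos [Fintype V] {f : ∀ a : F, (∀ j : {j : V // (j, a) ∈ E}, X j.1) → ℝ}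
    (hf0 : ∀ a s, 0 ≤ f a s) (hfnz : ∀ a : F, ∃ s, f a s ≠ 0)
    {mv : ∀ (i : V) (a : F), (i, a) ∈ E → X i → ℝ} (hmv : ∀ i a h xi, 0 < mv i a h xi)
    {Za : F → ℝ}
    (hZa : ∀ a : F, Za a =
      ∑ s : ∀ j : {j : V // (j, a) ∈ E}, X j.1,
        f a s * ∏ j : {j : V // (j, a) ∈ E}, mv j.1 a j.2 (s j))
    (a : F) : 0 < Za a := by
  obtain ⟨s₀, hs₀⟩ := hfnz a
  rw [hZa a]
  exact sum_pos' (fun s _ => mul_nonneg (hf0 a s) (prod_nonneg fun j _ => (hmv ..).le))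
    ⟨s₀, mem_univ _, mul_pos ((hf0 a s₀).lt_of_ne' hs₀) (prod_pos fun j _ => hmv ..)⟩

theorem zi_pos [Fintype F] [∀ i, Nonempty (X i)] {mf : ∀ (i : V) (a : F), (i, a) ∈ E → X i → ℝ}
    (hmf : ∀ i a h xi, 0 < mf i a h xi) {Zi : V → ℝ}
    (hZi : ∀ i : V, Zi i = ∑ xi : X i, ∏ a : {a : F // (i, a) ∈ E}, mf i a.1 a.2 xi)
    (i : V) : 0 < Zi i := by
  rw [hZi i]
  exact sum_pos (fun x _ => prod_pos fun a _ => hmf ..) univ_nonempty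

theorem bV_eq_div_zia [Fintype F] {mv mf : ∀ (i : V) (a : F), (i, a) ∈ E → X i → ℝ}
    (hmv : ∀ i a h xi, 0 < mv i a h xi) {γ : ∀ (i : V) (a : F), (i, a) ∈ E → ℝ}
    (hfix₁ : ∀ (i : V) (a : F) (h : (i, a) ∈ E) (xi : X i),
      mv i a h xi = γ i a h *
        ∏ c ∈ univ.filter (fun c : {c : F // (i, c) ∈ E} => (c : F) ≠ a), mf i c.1 c.2 xi)
    {Zi : V → ℝ}
    (hZi : ∀ i : V, Zi i = ∑ xi : X i, ∏ a : {a : F // (i, a) ∈ E}, mf i a.1 a.2 xi)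
    {Zia : ∀ (i : V) (a : F), (i, a) ∈ E → ℝ}
    (hZia : ∀ (i : V) (a : F) (h : (i, a) ∈ E),
      Zia i a h = ∑ xi : X i, mv i a h xi * mf i a h xi)
    {bV : ∀ i : V, X i → ℝ}
    (hbV : ∀ (i : V) (xi : X i),
      bV i xi = (∏ a : {a : F // (i, a) ∈ E}, mf i a.1 a.2 xi) / Zi i)
    (i : V) (a : F) (h : (i, a) ∈ E) (x : X i) :
    bV i x = mv i a h x * mf i a h x / Zia i a h := by
  have hγ : γ i a h ≠ 0 := left_ne_zero_of_mul ((hfix₁ i a h x).symm ▸ (hmv i a h x).ne')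
  have hmul : ∀ y, mv i a h y * mf i a h y
      = γ i a h * ∏ c : {c : F // (i, c) ∈ E}, mf i c.1 c.2 y := by
    intro y
    rw [hfix₁, prod_eq_mul_prod_filter_val_ne (p := fun c => (i, c) ∈ E)
      (fun c => mf i c.1 c.2 y) h]
    ring
  rw [hbV, hZia, hZi, sum_congr rfl fun y _ => hmul y, ← mul_sum, hmul, mul_div_mul_left _ _ hγ]

theorem sum_filter_bF_eq_bV [Fintype V] [∀ i, DecidableEq (X i)]
    {f : ∀ a : F, (∀ j : {j : V // (j, a) ∈ E}, X j.1) → ℝ}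
    {mv mf : ∀ (i : V) (a : F), (i, a) ∈ E → X i → ℝ}
    (hmf : ∀ i a h xi, 0 < mf i a h xi) {δ : ∀ (i : V) (a : F), (i, a) ∈ E → ℝ}
    (hfix₂ : ∀ (i : V) (a : F) (h : (i, a) ∈ E) (xi : X i),
      mf i a h xi = δ i a h *
        ∑ s ∈ univ.filter
            (fun s : ∀ j : {j : V // (j, a) ∈ E}, X j.1 => s ⟨i, h⟩ = xi),
          f a s *
            ∏ j ∈ univ.filter (fun j : {j : V // (j, a) ∈ E} => (j : V) ≠ i),
              mv j.1 a j.2 (s j))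
    {Za : F → ℝ}
    (hZa : ∀ a : F, Za a =
      ∑ s : ∀ j : {j : V // (j, a) ∈ E}, X j.1,
        f a s * ∏ j : {j : V // (j, a) ∈ E}, mv j.1 a j.2 (s j))
    {Zia : ∀ (i : V) (a : F), (i, a) ∈ E → ℝ}
    (hZia : ∀ (i : V) (a : F) (h : (i, a) ∈ E),
      Zia i a h = ∑ xi : X i, mv i a h xi * mf i a h xi)
    {bF : ∀ a : F, (∀ j : {j : V // (j, a) ∈ E}, X j.1) → ℝ}
    (hbF : ∀ (a : F) (s : ∀ j : {j : V // (j, a) ∈ E}, X j.1),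
      bF a s = f a s * (∏ j : {j : V // (j, a) ∈ E}, mv j.1 a j.2 (s j)) / Za a)
    {bV : ∀ i : V, X i → ℝ}
    (hbV_edge : ∀ (i : V) (a : F) (h : (i, a) ∈ E) (xi : X i),
      bV i xi = mv i a h xi * mf i a h xi / Zia i a h)
    (i : V) (a : F) (h : (i, a) ∈ E) (x : X i) :
    ∑ s ∈ univ.filter (fun s : ∀ j : {j : V // (j, a) ∈ E}, X j.1 => s ⟨i, h⟩ = x), bF a s
      = bV i x := by
  have hδ : δ i a h ≠ 0 := left_ne_zero_of_mul ((hfix₂ i a h x).symm ▸ (hmf i a h x).ne')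
  have hfiber : ∀ y,
      ∑ s ∈ univ.filter (fun s : ∀ j : {j : V // (j, a) ∈ E}, X j.1 => s ⟨i, h⟩ = y),
        f a s * ∏ j : {j : V // (j, a) ∈ E}, mv j.1 a j.2 (s j)
      = mv i a h y * mf i a h y / δ i a h := by
    intro y
    rw [hfix₂ i a h y, mul_left_comm, mul_div_cancel_left₀ _ hδ, mul_sum]
    refine sum_congr rfl fun s hs => ?_
    rw [prod_eq_mul_prod_filter_val_ne (p := fun j => (j, a) ∈ E)
      (fun j => mv j.1 a j.2 (s j)) h, (mem_filter.mp hs).2]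
    ring
  have hZa_eq : Za a = Zia i a h / δ i a h := by
    rw [hZa, ← sum_fiberwise univ (fun s => s ⟨i, h⟩)
      (fun s => f a s * ∏ j : {j : V // (j, a) ∈ E}, mv j.1 a j.2 (s j)), hZia, sum_div]
    exact sum_congr rfl fun y _ => hfiber y
  calc _ = (∑ s ∈ univ.filter (fun s : ∀ j : {j : V // (j, a) ∈ E}, X j.1 => s ⟨i, h⟩ = x),
          f a s * ∏ j : {j : V // (j, a) ∈ E}, mv j.1 a j.2 (s j)) / Za a := by
        rw [sum_div]
        exact sum_congr rfl fun s _ => hbF a s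
    _ = bV i x := by rw [hfiber, hZa_eq, div_div_div_cancel_right₀ hδ, hbV_edge i a h]

theorem factor_term_eq [Fintype V] [∀ i, DecidableEq (X i)] (a : F)
    {f : ∀ a : F, (∀ j : {j : V // (j, a) ∈ E}, X j.1) → ℝ}
    {mv : ∀ (i : V) (a : F), (i, a) ∈ E → X i → ℝ} (hmv : ∀ i a h xi, 0 < mv i a h xi)
    {Za : ℝ}
    (hZa : Za = ∑ s : ∀ j : {j : V // (j, a) ∈ E}, X j.1,
        f a s * ∏ j : {j : V // (j, a) ∈ E}, mv j.1 a j.2 (s j))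
    (hZa0 : Za ≠ 0) {bF : (∀ j : {j : V // (j, a) ∈ E}, X j.1) → ℝ}
    (hbF : ∀ s, bF s = f a s * (∏ j : {j : V // (j, a) ∈ E}, mv j.1 a j.2 (s j)) / Za)
    {bV : ∀ i : V, X i → ℝ}
    (hmarg : ∀ (j : {j : V // (j, a) ∈ E}) (x : X j.1),
      ∑ s ∈ univ.filter (fun s : ∀ j : {j : V // (j, a) ∈ E}, X j.1 => s j = x), bF s
        = bV j.1 x) :
    ∑ s, bF s * log (bF s) - ∑ s, bF s * log (f a s)
      = ∑ j : {j : V // (j, a) ∈ E}, ∑ x : X j.1, bV j.1 x * log (mv j.1 a j.2 x) - log Za := by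
  have hsplit : ∀ s, bF s * log (f a s * ∏ j : {j : V // (j, a) ∈ E}, mv j.1 a j.2 (s j))
      = bF s * log (f a s) + ∑ j : {j : V // (j, a) ∈ E}, bF s * log (mv j.1 a j.2 (s j)) := by
    intro s
    by_cases hf : f a s = 0
    · simp [hbF s, hf]
    · rw [log_mul hf (prod_ne_zero_iff.mpr fun j _ => (hmv ..).ne'),
        log_prod fun j _ => (hmv ..).ne', mul_add, mul_sum]
  have hmarginal : ∀ j : {j : V // (j, a) ∈ E},
      ∑ s, bF s * log (mv j.1 a j.2 (s j)) = ∑ x : X j.1, bV j.1 x * log (mv j.1 a j.2 x) := by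
    intro j
    rw [sum_mul_comp_eq_sum_fiber_mul bF (fun s => s j) (fun x => log (mv j.1 a j.2 x))]
    exact sum_congr rfl fun x _ => by rw [hmarg j x]
  rw [sum_mul_log_of_eq_div hbF hZa hZa0, sum_congr rfl fun s _ => hsplit s, sum_add_distrib,
    sum_comm, sum_congr rfl fun j _ => hmarginal j]
  ring

theorem variable_edge_terms_eq [Fintype F] {mv mf : ∀ (i : V) (a : F), (i, a) ∈ E → X i → ℝ}
    (hmv : ∀ i a h xi, 0 < mv i a h xi) (hmf : ∀ i a h xi, 0 < mf i a h xi) (i : V)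
    {Zi : ℝ} (hZi : Zi = ∑ xi : X i, ∏ a : {a : F // (i, a) ∈ E}, mf i a.1 a.2 xi)
    (hZi0 : Zi ≠ 0) {Zia : ∀ a : F, (i, a) ∈ E → ℝ} (hZia0 : ∀ a h, Zia a h ≠ 0)
    {bV : X i → ℝ} (hbV : ∀ xi, bV xi = (∏ a : {a : F // (i, a) ∈ E}, mf i a.1 a.2 xi) / Zi)
    (hbV_edge : ∀ a h xi, bV xi = mv i a h xi * mf i a h xi / Zia a h) :
    ∑ a : {a : F // (i, a) ∈ E}, ∑ x, bV x * log (mv i a.1 a.2 x)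
      = ((Fintype.card {c : F // (i, c) ∈ E} : ℝ) - 1) * ∑ x, bV x * log (bV x) - log Zi
        + ∑ a : {a : F // (i, a) ∈ E}, log (Zia a.1 a.2) := by
  have hnorm : ∑ x, bV x = 1 := sum_eq_one_of_eq_div hbV hZi hZi0
  have hedge : ∀ a : {a : F // (i, a) ∈ E}, ∑ x, bV x * log (mv i a.1 a.2 x)
      = ∑ x, bV x * log (bV x) - ∑ x, bV x * log (mf i a.1 a.2 x) + log (Zia a.1 a.2) := by
    intro a
    have hpoint : ∀ x, bV x * log (mv i a.1 a.2 x)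
        = bV x * log (bV x) - bV x * log (mf i a.1 a.2 x) + bV x * log (Zia a.1 a.2) := by
      intro x
      have hlog : log (bV x) = log (mv i a.1 a.2 x) + log (mf i a.1 a.2 x) - log (Zia a.1 a.2) := by
        rw [hbV_edge a.1 a.2 x, log_div (mul_pos (hmv ..) (hmf ..)).ne' (hZia0 a.1 a.2),
          log_mul (hmv ..).ne' (hmf ..).ne']
      rw [hlog]
      ring
    rw [sum_congr rfl fun x _ => hpoint x, sum_add_distrib, sum_sub_distrib, ← sum_mul, hnorm,
      one_mul]
  have hprod : ∑ a : {a : F // (i, a) ∈ E}, ∑ x, bV x * log (mf i a.1 a.2 x)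
      = ∑ x, bV x * log (∏ a : {a : F // (i, a) ∈ E}, mf i a.1 a.2 x) := by
    rw [sum_comm]
    exact sum_congr rfl fun x _ => by rw [log_prod fun a _ => (hmf ..).ne', mul_sum]
  rw [sum_congr rfl fun a _ => hedge a, sum_add_distrib, sum_sub_distrib, hprod, sum_const,
    card_univ, nsmul_eq_mul, sum_mul_log_of_eq_div hbV hZi hZi0]
  ring

theorem betheFE_eq_sum_log [Fintype V] [Fintype F] [∀ i, DecidableEq (X i)]
    {f : ∀ a : F, (∀ j : {j : V // (j, a) ∈ E}, X j.1) → ℝ}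
    {mv mf : ∀ (i : V) (a : F), (i, a) ∈ E → X i → ℝ}
    (hmv : ∀ i a h xi, 0 < mv i a h xi) (hmf : ∀ i a h xi, 0 < mf i a h xi)
    {Za : F → ℝ}
    (hZa : ∀ a : F, Za a =
      ∑ s : ∀ j : {j : V // (j, a) ∈ E}, X j.1,
        f a s * ∏ j : {j : V // (j, a) ∈ E}, mv j.1 a j.2 (s j))
    (hZa0 : ∀ a, Za a ≠ 0) {Zi : V → ℝ}
    (hZi : ∀ i : V, Zi i = ∑ xi : X i, ∏ a : {a : F // (i, a) ∈ E}, mf i a.1 a.2 xi)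
    (hZi0 : ∀ i, Zi i ≠ 0) {Zia : ∀ (i : V) (a : F), (i, a) ∈ E → ℝ}
    (hZia0 : ∀ i a h, Zia i a h ≠ 0) {bF : ∀ a : F, (∀ j : {j : V // (j, a) ∈ E}, X j.1) → ℝ}
    (hbF : ∀ (a : F) (s : ∀ j : {j : V // (j, a) ∈ E}, X j.1),
      bF a s = f a s * (∏ j : {j : V // (j, a) ∈ E}, mv j.1 a j.2 (s j)) / Za a)
    {bV : ∀ i : V, X i → ℝ}
    (hbV : ∀ (i : V) (xi : X i),
      bV i xi = (∏ a : {a : F // (i, a) ∈ E}, mf i a.1 a.2 xi) / Zi i)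
    (hbV_edge : ∀ (i : V) (a : F) (h : (i, a) ∈ E) (xi : X i),
      bV i xi = mv i a h xi * mf i a h xi / Zia i a h)
    (hmarg : ∀ (i : V) (a : F) (h : (i, a) ∈ E) (x : X i),
      ∑ s ∈ univ.filter (fun s : ∀ j : {j : V // (j, a) ∈ E}, X j.1 => s ⟨i, h⟩ = x), bF a s
        = bV i x) :
    betheFE E X f bF bV = ((∑ e : {p : V × F // p ∈ E}, log (Zia e.1.1 e.1.2 e.2)
      - ∑ a, log (Za a) - ∑ i, log (Zi i) : ℝ) : EReal) := by
  have hfin : ¬ ∃ (a : F) (s : ∀ j : {j : V // (j, a) ∈ E}, X j.1), 0 < bF a s ∧ f a s = 0 := by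
    rintro ⟨a, s, hpos, hfs⟩
    simp [hbF, hfs] at hpos
  rw [betheFE, if_neg hfin, EReal.coe_eq_coe_iff]
  have hfactor : ∑ a, ∑ s, bF a s * log (bF a s) - ∑ a, ∑ s, bF a s * log (f a s)
      = ∑ a, ∑ j : {j : V // (j, a) ∈ E}, ∑ x : X j.1, bV j.1 x * log (mv j.1 a j.2 x)
        - ∑ a, log (Za a) := by
    rw [← sum_sub_distrib, ← sum_sub_distrib]
    exact sum_congr rfl fun a _ => factor_term_eq a hmv (hZa a) (hZa0 a) (hbF a)
      fun j x => hmarg j.1 a j.2 x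
  have hregroup : ∑ a, ∑ j : {j : V // (j, a) ∈ E}, ∑ x : X j.1, bV j.1 x * log (mv j.1 a j.2 x)
      = ∑ i, ∑ a : {a : F // (i, a) ∈ E}, ∑ x, bV i x * log (mv i a.1 a.2 x) :=
    (sum_mem_eq_sum_sum_snd E fun e => ∑ x, bV e.1.1 x * log (mv e.1.1 e.1.2 e.2 x)).symm.trans
      (sum_mem_eq_sum_sum_fst E _)
  have hvariable : ∑ i, ∑ a : {a : F // (i, a) ∈ E}, ∑ x, bV i x * log (mv i a.1 a.2 x)
      = ∑ i, ((Fintype.card {c : F // (i, c) ∈ E} : ℝ) - 1) * ∑ x, bV i x * log (bV i x)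
        - ∑ i, log (Zi i) + ∑ e : {p : V × F // p ∈ E}, log (Zia e.1.1 e.1.2 e.2) := by
    rw [sum_mem_eq_sum_sum_fst E fun e => log (Zia e.1.1 e.1.2 e.2), ← sum_sub_distrib,
      ← sum_add_distrib]
    exact sum_congr rfl fun i _ => variable_edge_terms_eq hmv hmf i (hZi i) (hZi0 i) (hZia0 i)
      (hbV i) (hbV_edge i)
  linarith

end BeliefPropagation

open BeliefPropagation in
theorem stmt4_general {V F : Type} [Fintype V] [Fintype F] [DecidableEq V] [DecidableEq F]
    (E : Finset (V × F)) (X : V → Type)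
    [∀ i, Fintype (X i)] [∀ i, DecidableEq (X i)] [∀ i, Nonempty (X i)]
    (f : ∀ a : F, (∀ j : {j : V // (j, a) ∈ E}, X j.1) → ℝ)
    (hf0 : ∀ a s, 0 ≤ f a s) (hfnz : ∀ a : F, ∃ s, f a s ≠ 0)
    (mv mf : ∀ (i : V) (a : F), (i, a) ∈ E → X i → ℝ)
    (hmv : ∀ i a h xi, 0 < mv i a h xi) (hmf : ∀ i a h xi, 0 < mf i a h xi)
    (γ δ : ∀ (i : V) (a : F), (i, a) ∈ E → ℝ)
    (hfix₁ : ∀ (i : V) (a : F) (h : (i, a) ∈ E) (xi : X i),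
      mv i a h xi = γ i a h *
        ∏ c ∈ univ.filter (fun c : {c : F // (i, c) ∈ E} => (c : F) ≠ a), mf i c.1 c.2 xi)
    (hfix₂ : ∀ (i : V) (a : F) (h : (i, a) ∈ E) (xi : X i),
      mf i a h xi = δ i a h *
        ∑ s ∈ univ.filter
            (fun s : ∀ j : {j : V // (j, a) ∈ E}, X j.1 => s ⟨i, h⟩ = xi),
          f a s *
            ∏ j ∈ univ.filter (fun j : {j : V // (j, a) ∈ E} => (j : V) ≠ i),
              mv j.1 a j.2 (s j))
    (Za : F → ℝ)
    (hZa : ∀ a : F, Za a =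
      ∑ s : ∀ j : {j : V // (j, a) ∈ E}, X j.1,
        f a s * ∏ j : {j : V // (j, a) ∈ E}, mv j.1 a j.2 (s j))
    (Zi : V → ℝ)
    (hZi : ∀ i : V, Zi i = ∑ xi : X i, ∏ a : {a : F // (i, a) ∈ E}, mf i a.1 a.2 xi)
    (Zia : ∀ (i : V) (a : F), (i, a) ∈ E → ℝ)
    (hZia : ∀ (i : V) (a : F) (h : (i, a) ∈ E),
      Zia i a h = ∑ xi : X i, mv i a h xi * mf i a h xi)
    (bF : ∀ a : F, (∀ j : {j : V // (j, a) ∈ E}, X j.1) → ℝ)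
    (hbF : ∀ (a : F) (s : ∀ j : {j : V // (j, a) ∈ E}, X j.1),
      bF a s = f a s * (∏ j : {j : V // (j, a) ∈ E}, mv j.1 a j.2 (s j)) / Za a)
    (bV : ∀ i : V, X i → ℝ)
    (hbV : ∀ (i : V) (xi : X i),
      bV i xi = (∏ a : {a : F // (i, a) ∈ E}, mf i a.1 a.2 xi) / Zi i) :
    betheFE E X f bF bV ≠ ⊤ ∧
    Real.exp (- (betheFE E X f bF bV).toReal) =
      ((∏ a : F, Za a) * ∏ i : V, Zi i) /
        ∏ e : {p : V × F // p ∈ E}, Zia e.1.1 e.1.2 e.2 := by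
  have hZa_pos := za_pos hf0 hfnz hmv hZa
  have hZi_pos := zi_pos hmf hZi
  have hZia_pos := zia_pos hmv hmf hZia
  have hbV_edge := bV_eq_div_zia hmv hfix₁ hZi hZia hbV
  rw [betheFE_eq_sum_log hmv hmf hZa (fun a => (hZa_pos a).ne') hZi (fun i => (hZi_pos i).ne')
    (fun i a h => (hZia_pos i a h).ne') hbF hbV hbV_edge
    (sum_filter_bF_eq_bV hmf hfix₂ hZa hZia hbF hbV_edge), EReal.toReal_coe]
  refine ⟨EReal.coe_ne_top _, ?_⟩
  rw [show ∀ p q r : ℝ, -(r - p - q) = p + q - r from fun _ _ _ => by ring, exp_sub, exp_add,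
    exp_sum_log hZa_pos, exp_sum_log hZi_pos,
    exp_sum_log (g := fun e : {p : V × F // p ∈ E} => Zia e.1.1 e.1.2 e.2) fun e => hZia_pos ..]

/-- At a strictly positive BP fixed point of a factor graph with nonnegative, not
identically zero local functions, the Bethe partition sum `exp(−F_B)` at the induced
beliefs equals `(∏_a Z_a · ∏_i Z_i) / ∏_{(i,a)∈E} Z_{i,a}`. -/
theorem stmt4 {V F : Type} [Fintype V] [Fintype F] [DecidableEq V] [DecidableEq F]
    (E : Finset (V × F)) (X : V → Type)
    [∀ i, Fintype (X i)] [∀ i, DecidableEq (X i)] [∀ i, Nonempty (X i)]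
    (f : ∀ a : F, (∀ j : {j : V // (j, a) ∈ E}, X j.1) → ℝ)
    (hf0 : ∀ a s, 0 ≤ f a s) (hfnz : ∀ a : F, ∃ s, f a s ≠ 0)
    (mv mf : ∀ (i : V) (a : F), (i, a) ∈ E → X i → ℝ)
    (hmv : ∀ i a h xi, 0 < mv i a h xi) (hmf : ∀ i a h xi, 0 < mf i a h xi)
    (γ δ : ∀ (i : V) (a : F), (i, a) ∈ E → ℝ)
    (hγ : ∀ i a h, 0 < γ i a h) (hδ : ∀ i a h, 0 < δ i a h)
    (hfix₁ : ∀ (i : V) (a : F) (h : (i, a) ∈ E) (xi : X i),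
      mv i a h xi = γ i a h *
        ∏ c ∈ univ.filter (fun c : {c : F // (i, c) ∈ E} => (c : F) ≠ a), mf i c.1 c.2 xi)
    (hfix₂ : ∀ (i : V) (a : F) (h : (i, a) ∈ E) (xi : X i),
      mf i a h xi = δ i a h *
        ∑ s ∈ univ.filter
            (fun s : ∀ j : {j : V // (j, a) ∈ E}, X j.1 => s ⟨i, h⟩ = xi),
          f a s *
            ∏ j ∈ univ.filter (fun j : {j : V // (j, a) ∈ E} => (j : V) ≠ i),
              mv j.1 a j.2 (s j))
    (Za : F → ℝ)
    (hZa : ∀ a : F, Za a =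
      ∑ s : ∀ j : {j : V // (j, a) ∈ E}, X j.1,
        f a s * ∏ j : {j : V // (j, a) ∈ E}, mv j.1 a j.2 (s j))
    (Zi : V → ℝ)
    (hZi : ∀ i : V, Zi i = ∑ xi : X i, ∏ a : {a : F // (i, a) ∈ E}, mf i a.1 a.2 xi)
    (Zia : ∀ (i : V) (a : F), (i, a) ∈ E → ℝ)
    (hZia : ∀ (i : V) (a : F) (h : (i, a) ∈ E),
      Zia i a h = ∑ xi : X i, mv i a h xi * mf i a h xi)
    (bF : ∀ a : F, (∀ j : {j : V // (j, a) ∈ E}, X j.1) → ℝ)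
    (hbF : ∀ (a : F) (s : ∀ j : {j : V // (j, a) ∈ E}, X j.1),
      bF a s = f a s * (∏ j : {j : V // (j, a) ∈ E}, mv j.1 a j.2 (s j)) / Za a)
    (bV : ∀ i : V, X i → ℝ)
    (hbV : ∀ (i : V) (xi : X i),
      bV i xi = (∏ a : {a : F // (i, a) ∈ E}, mf i a.1 a.2 xi) / Zi i) :
    betheFE E X f bF bV ≠ ⊤ ∧
    Real.exp (- (betheFE E X f bF bV).toReal) =
      ((∏ a : F, Za a) * ∏ i : V, Zi i) /
        ∏ e : {p : V × F // p ∈ E}, Zia e.1.1 e.1.2 e.2 :=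
  stmt4_general E X f hf0 hfnz mv mf hmv hmf γ δ hfix₁ hfix₂ Za hZa Zi hZi Zia hZia bF hbF bV hbV
end

section
/- (Closing-the-box preserves the DeFG property.) Let a DeFG be given and let (J, I, F') be a box: F' ⊆ F, J ⊆ V₂, I ⊆ V₁, such that every factor adjacent (via E₂ or E₁) to a vertex of J or of I belongs to F'. Let P := (⋃_{a∈F'} ∂a) ∖ J and R := (⋃_{a∈F'} δa) ∖ I. Define the exterior function f' on (∏_{j∈P} S_j) × (∏_{j∈P} S_j) × (∏_{i∈R} X_i) by f'(s_P, s̃_P; x_R) := ∑_{s_J, s̃_J ∈ ∏_{j∈J} S_j} ∑_{x_I ∈ ∏_{i∈I} X_i} ∏_{a∈F'} f_a(s_{∂a}, s̃_{∂a}; x_{δa}), where each f_a is evaluated at the coordinates indexed by ∂a taken from the combined assignments (s_P, s_J) and (s̃_P, s̃_J), and at the coordinates indexed by δa taken from (x_R, x_I). Then for every fixed x_R ∈ ∏_{i∈R} X_i, the matrix with rows indexed by s_P, columns indexed by s̃_P, and entries f'(s_P, s̃_P; x_R), is positive semidefinite; hence the graph obtained by a closing-the-box operation on a DeFG is again a DeFG.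 -/
/-!
Each local function becomes, after precomposing with the restriction of the combined
assignment `(s_P, s_J)` to `∂a`, a positive semidefinite matrix indexed by `(s_P, s_J)`.
By the Schur product theorem their entrywise product over `F'` is positive semidefinite;
summing it over `s_J, s̃_J` is a congruence `Cᴴ B C` with `C (s_P, s_J) s_P' = δ_{s_P s_P'}`,
and the sum over `x_I` is a sum of positive semidefinite matrices.
-/

open Finset
open scoped ComplexOrder

namespace Matrix

variable {𝕜 : Type*} [RCLike 𝕜]

theorem posSemidef_ones {n : Type*} [Finite n] : (of fun _ _ : n => (1 : 𝕜)).PosSemidef := by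
  simpa [vecMulVec] using posSemidef_vecMulVec_self_star (1 : n → 𝕜)

theorem posSemidef_entrywise_prod {n ι : Type*} [Finite n] (s : Finset ι)
    {A : ι → Matrix n n 𝕜} (hA : ∀ a ∈ s, (A a).PosSemidef) :
    (of fun i j => ∏ a ∈ s, A a i j).PosSemidef := by
  classical
  induction s using Finset.cons_induction with
  | empty => simpa using posSemidef_ones
  | cons a s ha ih =>
    simp_rw [prod_cons]
    exact (hA a (mem_cons_self a s)).hadamard (ih fun b hb => hA b (mem_cons_of_mem hb))

theorem PosSemidef.sum_sum_snd {α β : Type*} [Fintype α] [Fintype β]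
    {B : Matrix (α × β) (α × β) 𝕜} (hB : B.PosSemidef) :
    (of fun p q : α => ∑ s, ∑ t, B (p, s) (q, t)).PosSemidef := by
  classical
  let C : Matrix (α × β) α 𝕜 := (1 : Matrix α α 𝕜).submatrix Prod.fst id
  have hC : (of fun p q : α => ∑ s, ∑ t, B (p, s) (q, t)) = Cᴴ * B * C := by
    ext p q
    -- summing the `α`-component innermost keeps the Kronecker deltas from `C` collapsible
    simpa [C, mul_apply, Fintype.sum_prod_type_right, one_apply] using sum_comm
  exact hC ▸ hB.conjTranspose_mul_mul_same C

theorem posSemidef_sum_sum_sum_prod {Q K L ι : Type*} [Fintype Q] [Fintype K] [Fintype L]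
    (s : Finset ι) {A : L → ι → Matrix (Q × K) (Q × K) 𝕜}
    (hA : ∀ x, ∀ a ∈ s, (A x a).PosSemidef) :
    (of fun p q : Q => ∑ k, ∑ k', ∑ x, ∏ a ∈ s, A x a (p, k) (q, k')).PosSemidef := by
  have hx (x : L) :
      (of fun p q : Q => ∑ k, ∑ k', ∏ a ∈ s, A x a (p, k) (q, k')).PosSemidef := by
    simpa using (posSemidef_entrywise_prod s (hA x)).sum_sum_snd
  convert posSemidef_sum univ fun x _ => hx x using 1
  ext p q
  simp only [of_apply, sum_apply]
  conv_rhs => rw [sum_comm]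
  exact sum_congr rfl fun _ _ => sum_comm

end Matrix

theorem stmt5_general {V₁ V₂ F : Type} [Fintype V₂]
    [DecidableEq V₁] [DecidableEq V₂] [DecidableEq F]
    (E₁ : Finset (V₁ × F)) (E₂ : Finset (V₂ × F))
    (X : V₁ → Type) [∀ i, Fintype (X i)]
    (S : V₂ → Type) [∀ j, Fintype (S j)]
    (f : ∀ a : F, (∀ j : {j : V₂ // (j, a) ∈ E₂}, S j.1) →
                  (∀ j : {j : V₂ // (j, a) ∈ E₂}, S j.1) →
                  (∀ i : {i : V₁ // (i, a) ∈ E₁}, X i.1) → ℂ)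
    (hPSD : ∀ (a : F) (x : ∀ i : {i : V₁ // (i, a) ∈ E₁}, X i.1),
      Matrix.PosSemidef (Matrix.of fun s st => f a s st x))
    (F' : Finset F) (J : Finset V₂) (I : Finset V₁)
    (xR : ∀ i : {i : V₁ // (∃ a ∈ F', (i, a) ∈ E₁) ∧ i ∉ I}, X i.1) :
    Matrix.PosSemidef (Matrix.of
      fun (sP stP : ∀ j : {j : V₂ // (∃ a ∈ F', (j, a) ∈ E₂) ∧ j ∉ J}, S j.1) =>
        ∑ sJ : ∀ j : {j : V₂ // j ∈ J}, S j.1,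
        ∑ stJ : ∀ j : {j : V₂ // j ∈ J}, S j.1,
        ∑ xI : ∀ i : {i : V₁ // i ∈ I}, X i.1,
          ∏ a ∈ F'.attach,
            f a.1
              (fun j => if h : j.1 ∈ J then sJ ⟨j.1, h⟩
                        else sP ⟨j.1, ⟨⟨a.1, a.2, j.2⟩, h⟩⟩)
              (fun j => if h : j.1 ∈ J then stJ ⟨j.1, h⟩
                        else stP ⟨j.1, ⟨⟨a.1, a.2, j.2⟩, h⟩⟩)
              (fun i => if h : i.1 ∈ I then xI ⟨i.1, h⟩
                        else xR ⟨i.1, ⟨⟨a.1, a.2, i.2⟩, h⟩⟩)) := by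
  let restrictS (a : F')
      (k : (∀ j : {j : V₂ // (∃ a ∈ F', (j, a) ∈ E₂) ∧ j ∉ J}, S j.1) ×
        (∀ j : {j : V₂ // j ∈ J}, S j.1))
      (j : {j : V₂ // (j, a.1) ∈ E₂}) : S j.1 :=
    if h : j.1 ∈ J then k.2 ⟨j.1, h⟩ else k.1 ⟨j.1, ⟨⟨a.1, a.2, j.2⟩, h⟩⟩
  let restrictX (a : F') (xI : ∀ i : {i : V₁ // i ∈ I}, X i.1)
      (i : {i : V₁ // (i, a.1) ∈ E₁}) : X i.1 :=
    if h : i.1 ∈ I then xI ⟨i.1, h⟩ else xR ⟨i.1, ⟨⟨a.1, a.2, i.2⟩, h⟩⟩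
  exact Matrix.posSemidef_sum_sum_sum_prod F'.attach
    (A := fun xI a =>
      (Matrix.of fun s st => f a.1 s st (restrictX a xI)).submatrix (restrictS a) (restrictS a))
    fun xI a _ => (hPSD a.1 (restrictX a xI)).submatrix (restrictS a)

/-- Closing-the-box preserves the DeFG property: given a double-edge factor graph with
positive-semidefinite local functions and a box `(J, I, F')`, the exterior function
obtained by summing over the variables inside the box is again positive semidefinite
(as a matrix in the remaining quantum variables, for each fixed classical assignment). -/
theorem stmt5 {V₁ V₂ F : Type} [Fintype V₁] [Fintype V₂] [Fintype F]
    [DecidableEq V₁] [DecidableEq V₂] [DecidableEq F]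
    (E₁ : Finset (V₁ × F)) (E₂ : Finset (V₂ × F))
    (X : V₁ → Type) [∀ i, Fintype (X i)] [∀ i, DecidableEq (X i)] [∀ i, Nonempty (X i)]
    (S : V₂ → Type) [∀ j, Fintype (S j)] [∀ j, DecidableEq (S j)] [∀ j, Nonempty (S j)]
    (f : ∀ a : F, (∀ j : {j : V₂ // (j, a) ∈ E₂}, S j.1) →
                  (∀ j : {j : V₂ // (j, a) ∈ E₂}, S j.1) →
                  (∀ i : {i : V₁ // (i, a) ∈ E₁}, X i.1) → ℂ)
    (hPSD : ∀ (a : F) (x : ∀ i : {i : V₁ // (i, a) ∈ E₁}, X i.1),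
      Matrix.PosSemidef (Matrix.of fun s st => f a s st x))
    (F' : Finset F) (J : Finset V₂) (I : Finset V₁)
    (hJ : ∀ (j : V₂) (a : F), j ∈ J → (j, a) ∈ E₂ → a ∈ F')
    (hI : ∀ (i : V₁) (a : F), i ∈ I → (i, a) ∈ E₁ → a ∈ F')
    (xR : ∀ i : {i : V₁ // (∃ a ∈ F', (i, a) ∈ E₁) ∧ i ∉ I}, X i.1) :
    Matrix.PosSemidef (Matrix.of
      fun (sP stP : ∀ j : {j : V₂ // (∃ a ∈ F', (j, a) ∈ E₂) ∧ j ∉ J}, S j.1) =>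
        ∑ sJ : ∀ j : {j : V₂ // j ∈ J}, S j.1,
        ∑ stJ : ∀ j : {j : V₂ // j ∈ J}, S j.1,
        ∑ xI : ∀ i : {i : V₁ // i ∈ I}, X i.1,
          ∏ a ∈ F'.attach,
            f a.1
              (fun j => if h : j.1 ∈ J then sJ ⟨j.1, h⟩
                        else sP ⟨j.1, ⟨⟨a.1, a.2, j.2⟩, h⟩⟩)
              (fun j => if h : j.1 ∈ J then stJ ⟨j.1, h⟩
                        else stP ⟨j.1, ⟨⟨a.1, a.2, j.2⟩, h⟩⟩)
              (fun i => if h : i.1 ∈ I then xI ⟨i.1, h⟩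
                        else xR ⟨i.1, ⟨⟨a.1, a.2, i.2⟩, h⟩⟩)) :=
  stmt5_general E₁ E₂ X S f hPSD F' J I xR
end

section
/- For any DeFG, the partition sum Z := ∑_{s, s̃ ∈ ∏_{j∈V₂} S_j} ∑_{x ∈ ∏_{i∈V₁} X_i} ∏_{a∈F} f_a(s_{∂a}, s̃_{∂a}; x_{δa}) is a nonnegative real number; that is, Z has zero imaginary part and nonnegative real part. -/
open Finset
open scoped ComplexOrder

/-!
For a fixed classical configuration `x`, the entrywise product over the factors of the
(row- and column-restricted) local matrices is positive semidefinite by the Schur product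
theorem, and so is its sum over `x`. The partition sum is the sum of all entries of that
matrix, i.e. its quadratic form at the all-ones vector, hence a nonnegative real.
-/

namespace Matrix

theorem PosSemidef.sum_entries_nonneg {n R : Type*} [Fintype n] [Ring R] [PartialOrder R]
    [StarRing R] {M : Matrix n n R} (hM : M.PosSemidef) :
    0 ≤ ∑ k, ∑ l, M k l := by
  simpa [dotProduct, mulVec, Finset.sum_comm (γ := n)] using hM.dotProduct_mulVec_nonneg 1

theorem posSemidef_hadamard_prod {ι n 𝕜 : Type*} [Fintype n] [RCLike 𝕜] (s : Finset ι)
    {A : ι → Matrix n n 𝕜} (hA : ∀ i ∈ s, (A i).PosSemidef) :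
    (of fun k l => ∏ i ∈ s, A i k l).PosSemidef := by
  induction s using Finset.cons_induction with
  | empty => simpa [vecMulVec] using posSemidef_vecMulVec_self_star (fun _ : n => (1 : 𝕜))
  | cons i s hi ih =>
    have hprod : (of fun k l => ∏ j ∈ s.cons i hi, A j k l)
        = A i ⊙ of fun k l => ∏ j ∈ s, A j k l := by
      ext k l
      simp [hadamard]
    rw [hprod]
    exact (hA i (mem_cons_self i s)).hadamard (ih fun j hj => hA j (mem_cons_of_mem hj))

end Matrix

theorem stmt6_general {V₁ V₂ F : Type} [Fintype V₁] [Fintype V₂] [Fintype F]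
    [DecidableEq V₁] [DecidableEq V₂]
    (E₁ : Finset (V₁ × F)) (E₂ : Finset (V₂ × F))
    (X : V₁ → Type) [∀ i, Fintype (X i)]
    (S : V₂ → Type) [∀ j, Fintype (S j)]
    (f : ∀ a : F, (∀ j : {j : V₂ // (j, a) ∈ E₂}, S j.1) →
                  (∀ j : {j : V₂ // (j, a) ∈ E₂}, S j.1) →
                  (∀ i : {i : V₁ // (i, a) ∈ E₁}, X i.1) → ℂ)
    (hPSD : ∀ (a : F) (x : ∀ i : {i : V₁ // (i, a) ∈ E₁}, X i.1),
      Matrix.PosSemidef (Matrix.of fun s st => f a s st x)) :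
    (∑ s : ∀ j : V₂, S j, ∑ st : ∀ j : V₂, S j, ∑ x : ∀ i : V₁, X i,
        ∏ a : F, f a (fun j => s j.1) (fun j => st j.1) (fun i => x i.1)).im = 0 ∧
    0 ≤ (∑ s : ∀ j : V₂, S j, ∑ st : ∀ j : V₂, S j, ∑ x : ∀ i : V₁, X i,
        ∏ a : F, f a (fun j => s j.1) (fun j => st j.1) (fun i => x i.1)).re := by
  have hG : (∑ x : ∀ i : V₁, X i, Matrix.of fun (s st : ∀ j : V₂, S j) =>
      ∏ a : F, f a (fun j => s j.1) (fun j => st j.1) (fun i => x i.1)).PosSemidef :=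
    Matrix.posSemidef_sum _ fun x _ => Matrix.posSemidef_hadamard_prod _ fun a _ =>
      (hPSD a fun i => x i.1).submatrix (fun (s : ∀ j : V₂, S j) j => s j.1)
  have hZ := hG.sum_entries_nonneg
  simp only [Matrix.sum_apply, Matrix.of_apply] at hZ
  exact ⟨(Complex.nonneg_iff.mp hZ).2.symm, (Complex.nonneg_iff.mp hZ).1⟩

/-- The partition sum of a double-edge factor graph (with positive semidefinite local
functions) is a nonnegative real number: its imaginary part vanishes and its real part is
nonnegative. -/
theorem stmt6 {V₁ V₂ F : Type} [Fintype V₁] [Fintype V₂] [Fintype F]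
    [DecidableEq V₁] [DecidableEq V₂] [DecidableEq F]
    (E₁ : Finset (V₁ × F)) (E₂ : Finset (V₂ × F))
    (X : V₁ → Type) [∀ i, Fintype (X i)] [∀ i, DecidableEq (X i)] [∀ i, Nonempty (X i)]
    (S : V₂ → Type) [∀ j, Fintype (S j)] [∀ j, DecidableEq (S j)] [∀ j, Nonempty (S j)]
    (f : ∀ a : F, (∀ j : {j : V₂ // (j, a) ∈ E₂}, S j.1) →
                  (∀ j : {j : V₂ // (j, a) ∈ E₂}, S j.1) →
                  (∀ i : {i : V₁ // (i, a) ∈ E₁}, X i.1) → ℂ)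
    (hPSD : ∀ (a : F) (x : ∀ i : {i : V₁ // (i, a) ∈ E₁}, X i.1),
      Matrix.PosSemidef (Matrix.of fun s st => f a s st x)) :
    (∑ s : ∀ j : V₂, S j, ∑ st : ∀ j : V₂, S j, ∑ x : ∀ i : V₁, X i,
        ∏ a : F, f a (fun j => s j.1) (fun j => st j.1) (fun i => x i.1)).im = 0 ∧
    0 ≤ (∑ s : ∀ j : V₂, S j, ∑ st : ∀ j : V₂, S j, ∑ x : ∀ i : V₁, X i,
        ∏ a : F, f a (fun j => s j.1) (fun j => st j.1) (fun i => x i.1)).re :=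
  stmt6_general E₁ E₂ X S f hPSD
end

section
/- (Holant theorem for DeFGs.) Let a DeFG without classical variables be given, with partition sum Z := ∑_{s, s̃ ∈ ∏_{j∈V} S_j} ∏_{a∈F} f_a(s_{∂a}, s̃_{∂a}). Suppose for each edge (j,a) ∈ E a finite set T_{j,a} and functions φ_{j,a} : S_j×S_j×T_{j,a}×T_{j,a} → ℂ and φ̂_{j,a} : T_{j,a}×T_{j,a}×S_j×S_j → ℂ are given which are Hermitian (φ_{j,a}(s,s̃;t,t̃) = conj(φ_{j,a}(s̃,s;t̃,t)) and φ̂_{j,a}(t,t̃;s,s̃) = conj(φ̂_{j,a}(t̃,t;s̃,s))) and satisfy ∑_{t,t̃∈T_{j,a}} φ_{j,a}(s,s̃;t,t̃)·φ̂_{j,a}(t,t̃;s',s̃') = δ_{s,s'}·δ_{s̃,s̃'} for all s,s̃,s',s̃' ∈ S_j. Define f̂_a(t_{∂a,a}, t̃_{∂a,a}) := ∑_{s_{∂a}, s̃_{∂a}} f_a(s_{∂a}, s̃_{∂a})·∏_{j∈∂a} φ̂_{j,a}(t_{j,a}, t̃_{j,a}; s_j, s̃_j) and ĥ_j(t_{j,∂j},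 t̃_{j,∂j}) := ∑_{s_j, s̃_j} ∏_{a∈∂j} φ_{j,a}(s_j, s̃_j; t_{j,a}, t̃_{j,a}). Then Z = ∑_{t, t̃ ∈ ∏_{(j,a)∈E} T_{j,a}} ∏_{a∈F} f̂_a(t_{∂a,a}, t̃_{∂a,a}) · ∏_{j∈V} ĥ_j(t_{j,∂j}, t̃_{j,∂j}). -/
open Finset
open scoped ComplexOrder

/-!
Valiant's Holant theorem: for each edge `(j,a)`, the inverse pair `φ, φ̂` resolves the identity,
`∑_b φ(x, b) φ̂(b, y) = δ_{x,y}`. Inserting this resolution on every edge and regrouping the resulting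
product once by factors and once by variables turns the partition sum into the Holant sum. For a DeFG
the variable on a vertex is the pair `(s_j, s̃_j) ∈ S_j × S_j` and the one on an edge is
`(t_{j,a}, t̃_{j,a})`, so the theorem is the Holant theorem for these pair alphabets.
-/

section Holant

variable {R : Type*} [CommSemiring R]

theorem sum_pi_prod_eq_sum_sum {ι : Type*} [Fintype ι] [DecidableEq ι] {α β : ι → Type*}
    [∀ i, Fintype (α i)] [∀ i, Fintype (β i)] (G : (∀ i, α i) → (∀ i, β i) → R) :
    ∑ x : ∀ i, α i × β i, G (fun i => (x i).1) (fun i => (x i).2) = ∑ s, ∑ s', G s s' := by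
  rw [← Fintype.sum_prod_type']
  exact Equiv.sum_comp (Equiv.arrowProdEquivProdArrow ι α β) fun p => G p.1 p.2

theorem sum_transform_mul_prod_eq_of_inverse {ι : Type*} [Fintype ι] [DecidableEq ι]
    {A B : ι → Type*} [∀ i, Fintype (A i)] [∀ i, DecidableEq (A i)] [∀ i, Fintype (B i)]
    (g : (∀ i, A i) → R) (φ : ∀ i, A i → B i → R) (φh : ∀ i, B i → A i → R)
    (hinv : ∀ i x y, ∑ b, φ i x b * φh i b y = if x = y then 1 else 0) (x : ∀ i, A i) :
    ∑ t : ∀ i, B i, (∑ y, g y * ∏ i, φh i (t i) (y i)) * ∏ i, φ i (x i) (t i) = g x :=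
  calc ∑ t : ∀ i, B i, (∑ y, g y * ∏ i, φh i (t i) (y i)) * ∏ i, φ i (x i) (t i)
      = ∑ y, g y * ∑ t : ∀ i, B i, ∏ i, φ i (x i) (t i) * φh i (t i) (y i) := by
        simp only [sum_mul, mul_sum, prod_mul_distrib]
        rw [sum_comm]
        exact sum_congr rfl fun _ _ => sum_congr rfl fun _ _ => by ring
    _ = ∑ y, g y * ∏ i, if x i = y i then (1 : R) else 0 := by
        refine sum_congr rfl fun y _ => ?_
        rw [← Fintype.prod_sum fun i b => φ i (x i) b * φh i b (y i)]
        simp only [hinv]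
    _ = g x := by
        rw [Fintype.sum_eq_single x fun y hy => ?_]
        · simp
        · obtain ⟨i, hi⟩ := Function.ne_iff.mp hy
          rw [prod_eq_zero (mem_univ i) (if_neg (Ne.symm hi)), mul_zero]

variable {V F : Type*} [Fintype V] [Fintype F] [DecidableEq V] [DecidableEq F]
  (E : Finset (V × F))

def edgePiEquivFactorPi (B : V → F → Type*) :
    (∀ e : {p : V × F // p ∈ E}, B e.1.1 e.1.2) ≃ ∀ a, ∀ j : {j : V // (j, a) ∈ E}, B j.1 a where
  toFun t a j := t ⟨(j.1, a), j.2⟩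
  invFun u e := u e.1.2 ⟨e.1.1, e.2⟩

theorem prod_edges_by_vertex_eq_prod_edges_by_factor (h : {p : V × F // p ∈ E} → R) :
    ∏ j, ∏ c : {c : F // (j, c) ∈ E}, h ⟨(j, c.1), c.2⟩
      = ∏ a, ∏ j : {j : V // (j, a) ∈ E}, h ⟨(j.1, a), j.2⟩ := by
  let byVertex : (Σ j : V, {c : F // (j, c) ∈ E}) ≃ {p : V × F // p ∈ E} :=
    { toFun x := ⟨(x.1, x.2.1), x.2.2⟩, invFun e := ⟨e.1.1, e.1.2, e.2⟩ }
  let byFactor : (Σ a : F, {j : V // (j, a) ∈ E}) ≃ {p : V × F // p ∈ E} :=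
    { toFun x := ⟨(x.2.1, x.1), x.2.2⟩, invFun e := ⟨e.1.2, e.1.1, e.2⟩ }
  rw [prod_sigma', prod_sigma', univ_sigma_univ, univ_sigma_univ]
  exact (Equiv.prod_comp byVertex h).trans (Equiv.prod_comp byFactor h).symm

theorem partition_sum_eq_holant_sum {A : V → Type*} [∀ j, Fintype (A j)] [∀ j, DecidableEq (A j)]
    {B : V → F → Type*} [∀ j a, Fintype (B j a)]
    (g : ∀ a, (∀ j : {j : V // (j, a) ∈ E}, A j.1) → R)
    (φ : ∀ j a, A j → B j a → R) (φh : ∀ j a, B j a → A j → R)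
    (hinv : ∀ j a, (j, a) ∈ E → ∀ x y, ∑ b, φ j a x b * φh j a b y = if x = y then 1 else 0) :
    ∑ x : ∀ j, A j, ∏ a, g a (fun j => x j.1)
      = ∑ t : ∀ e : {p : V × F // p ∈ E}, B e.1.1 e.1.2,
          (∏ a, ∑ y, g a y * ∏ j : {j : V // (j, a) ∈ E}, φh j.1 a (t ⟨(j.1, a), j.2⟩) (y j))
            * ∏ j, ∑ x : A j, ∏ c : {c : F // (j, c) ∈ E}, φ j c.1 x (t ⟨(j, c.1), c.2⟩) := by
  symm
  calc _ = ∑ x : ∀ j, A j, ∑ t : ∀ e : {p : V × F // p ∈ E}, B e.1.1 e.1.2, ∏ a,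
          (∑ y, g a y * ∏ j : {j : V // (j, a) ∈ E}, φh j.1 a (t ⟨(j.1, a), j.2⟩) (y j))
            * ∏ j : {j : V // (j, a) ∈ E}, φ j.1 a (x j.1) (t ⟨(j.1, a), j.2⟩) := by
        rw [sum_comm]
        refine sum_congr rfl fun t _ => ?_
        simp only [Fintype.prod_sum, mul_sum, prod_mul_distrib]
        refine sum_congr rfl fun x _ => ?_
        rw [prod_edges_by_vertex_eq_prod_edges_by_factor E fun e => φ e.1.1 e.1.2 (x e.1.1) (t e)]
    _ = ∑ x : ∀ j, A j, ∏ a, ∑ u : ∀ j : {j : V // (j, a) ∈ E}, B j.1 a,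
          (∑ y, g a y * ∏ j, φh j.1 a (u j) (y j)) * ∏ j, φ j.1 a (x j.1) (u j) := by
        refine sum_congr rfl fun x _ => ?_
        rw [Fintype.prod_sum]
        exact Equiv.sum_comp (edgePiEquivFactorPi E B)
          fun u => ∏ a, (∑ y, g a y * ∏ j, φh j.1 a (u a j) (y j)) * ∏ j, φ j.1 a (x j.1) (u a j)
    _ = _ := by
        refine sum_congr rfl fun x _ => prod_congr rfl fun a _ => ?_
        exact sum_transform_mul_prod_eq_of_inverse (g a) (fun j => φ j.1 a) (fun j => φh j.1 a)
          (fun j => hinv j.1 a j.2) fun j => x j.1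

end Holant

theorem stmt8_general {V F : Type} [Fintype V] [Fintype F] [DecidableEq V] [DecidableEq F]
    (E : Finset (V × F))
    (S : V → Type) [∀ j, Fintype (S j)] [∀ j, DecidableEq (S j)]
    (f : ∀ a : F, (∀ j : {j : V // (j, a) ∈ E}, S j.1) →
                  (∀ j : {j : V // (j, a) ∈ E}, S j.1) → ℂ)
    (T : V → F → Type) [∀ j a, Fintype (T j a)]
    (φ : ∀ (j : V) (a : F), S j → S j → T j a → T j a → ℂ)
    (φh : ∀ (j : V) (a : F), T j a → T j a → S j → S j → ℂ)
    (hinv : ∀ (j : V) (a : F), (j, a) ∈ E → ∀ s st s' st' : S j,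
      ∑ t : T j a, ∑ tt : T j a, φ j a s st t tt * φh j a t tt s' st'
        = (if s = s' then 1 else 0) * (if st = st' then 1 else 0)) :
    ∑ s : ∀ j : V, S j, ∑ st : ∀ j : V, S j,
        ∏ a : F, f a (fun j => s j.1) (fun j => st j.1)
      = ∑ t : ∀ e : {p : V × F // p ∈ E}, T e.1.1 e.1.2,
        ∑ tt : ∀ e : {p : V × F // p ∈ E}, T e.1.1 e.1.2,
          (∏ a : F,
            ∑ s : ∀ j : {j : V // (j, a) ∈ E}, S j.1,
            ∑ st : ∀ j : {j : V // (j, a) ∈ E}, S j.1,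
              f a s st *
                ∏ j : {j : V // (j, a) ∈ E},
                  φh j.1 a (t ⟨(j.1, a), j.2⟩) (tt ⟨(j.1, a), j.2⟩) (s j) (st j))
          * ∏ j : V,
              ∑ sj : S j, ∑ stj : S j,
                ∏ c : {c : F // (j, c) ∈ E},
                  φ j c.1 sj stj (t ⟨(j, c.1), c.2⟩) (tt ⟨(j, c.1), c.2⟩) := by
  have hinv_pair : ∀ j a, (j, a) ∈ E → ∀ x y : S j × S j,
      ∑ b : T j a × T j a, φ j a x.1 x.2 b.1 b.2 * φh j a b.1 b.2 y.1 y.2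
        = if x = y then 1 else 0 := by
    intro j a hja x y
    rw [Fintype.sum_prod_type' fun t tt => φ j a x.1 x.2 t tt * φh j a t tt y.1 y.2, hinv j a hja,
      ite_zero_mul_ite_zero, mul_one]
    simp only [Prod.ext_iff]
  have hpair := partition_sum_eq_holant_sum E (A := fun j => S j × S j) (B := fun j a => T j a × T j a)
    (fun a y => f a (fun j => (y j).1) (fun j => (y j).2))
    (fun j a x b => φ j a x.1 x.2 b.1 b.2) (fun j a b x => φh j a b.1 b.2 x.1 x.2) hinv_pair
  -- the double sums over configurations must be merged first: `Fintype.sum_prod_type'` matches them too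
  simp only [← sum_pi_prod_eq_sum_sum]
  simp only [← Fintype.sum_prod_type']
  exact hpair

/-- Holant theorem for DeFGs: given, for every edge `(j,a)` of a DeFG (without classical
variables), a finite set `T j a` together with Hermitian functions `φ j a` and `φh j a`
inverse to each other, the partition sum can be computed from the transformed local
functions `f̂_a` and the new vertex functions `ĥ_j`. -/
theorem stmt8 {V F : Type} [Fintype V] [Fintype F] [DecidableEq V] [DecidableEq F]
    (E : Finset (V × F))
    (S : V → Type) [∀ j, Fintype (S j)] [∀ j, DecidableEq (S j)] [∀ j, Nonempty (S j)]
    (f : ∀ a : F, (∀ j : {j : V // (j, a) ∈ E}, S j.1) →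
                  (∀ j : {j : V // (j, a) ∈ E}, S j.1) → ℂ)
    (hPSD : ∀ a : F, Matrix.PosSemidef (Matrix.of fun s st => f a s st))
    (T : V → F → Type) [∀ j a, Fintype (T j a)] [∀ j a, DecidableEq (T j a)]
    (φ : ∀ (j : V) (a : F), S j → S j → T j a → T j a → ℂ)
    (φh : ∀ (j : V) (a : F), T j a → T j a → S j → S j → ℂ)
    (hφHerm : ∀ (j : V) (a : F), (j, a) ∈ E → ∀ (s st : S j) (t tt : T j a),
      φ j a s st t tt = (starRingEnd ℂ) (φ j a st s tt t))
    (hφhHerm : ∀ (j : V) (a : F), (j, a) ∈ E → ∀ (t tt : T j a) (s st : S j),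
      φh j a t tt s st = (starRingEnd ℂ) (φh j a tt t st s))
    (hinv : ∀ (j : V) (a : F), (j, a) ∈ E → ∀ s st s' st' : S j,
      ∑ t : T j a, ∑ tt : T j a, φ j a s st t tt * φh j a t tt s' st'
        = (if s = s' then 1 else 0) * (if st = st' then 1 else 0)) :
    ∑ s : ∀ j : V, S j, ∑ st : ∀ j : V, S j,
        ∏ a : F, f a (fun j => s j.1) (fun j => st j.1)
      = ∑ t : ∀ e : {p : V × F // p ∈ E}, T e.1.1 e.1.2,
        ∑ tt : ∀ e : {p : V × F // p ∈ E}, T e.1.1 e.1.2,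
          (∏ a : F,
            ∑ s : ∀ j : {j : V // (j, a) ∈ E}, S j.1,
            ∑ st : ∀ j : {j : V // (j, a) ∈ E}, S j.1,
              f a s st *
                ∏ j : {j : V // (j, a) ∈ E},
                  φh j.1 a (t ⟨(j.1, a), j.2⟩) (tt ⟨(j.1, a), j.2⟩) (s j) (st j))
          * ∏ j : V,
              ∑ sj : S j, ∑ stj : S j,
                ∏ c : {c : F // (j, c) ∈ E},
                  φ j c.1 sj stj (t ⟨(j, c.1), c.2⟩) (tt ⟨(j, c.1), c.2⟩) :=
  stmt8_general E S f T φ φh hinv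
end

section
/- (Every CC-QSC arises from a quantum channel with memory.) Let X and Y be finite alphabets, d ≥ 1, and let a CC-QSC be given by Kraus families {F_k^{y|x}}_k of d×d complex matrices satisfying ∑_{y∈Y} ∑_k (F_k^{y|x})ᴴ F_k^{y|x} = I for every x ∈ X. Then there exists a finite family {G_m} of complex matrices with rows indexed by Y×{1,…,d} and columns indexed by X×{1,…,d}, satisfying ∑_m G_mᴴ G_m = I (so that M ↦ ∑_m G_m M G_mᴴ is a completely positive trace-preserving map, i.e. a quantum channel, by the Kraus characterization), such that for every x ∈ X and every d×d complex matrix ρ: ∑_m G_m (E_{xx} ⊗ ρ) G_mᴴ = ∑_{y∈Y} E_{yy} ⊗ (∑_k F_k^{y|x} ρ (F_k^{y|x})ᴴ), where E_{xx} (resp. E_{yy}) denotes the standard matrix unit with a single 1 in position (x,x) (resp. (y,y)) and ⊗ is the Kronecker product. In words: every CC-QSC is realized by a quantum channel with memory together with the orthonormal ensemble {|x⟩⟨x|}_{x∈X} and the projective measurement {|y⟩⟨y|}_{y∈Y}. -/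
/-!
Take the Kraus operators `G_{x,y,k} = E_{yx} ⊗ F_k^{y|x}`. Since `E_{yx}ᴴ E_{yx} = E_{xx}`, the
normalization of the `F_k^{y|x}` for each fixed `x` assembles into `∑ G_{x,y,k}ᴴ G_{x,y,k} = I`;
and since `E_{yx} E_{x'x'} E_{xy}` vanishes unless `x = x'`, only the operators with input `x`
act on `E_{xx} ⊗ ρ`, each producing the block `E_{yy} ⊗ F_k^{y|x} ρ (F_k^{y|x})ᴴ`.
-/

open Matrix
open scoped Kronecker

namespace Matrix

variable {R ι l m n p : Type*}

theorem kronecker_sum [NonUnitalNonAssocSemiring R] (s : Finset ι) (A : Matrix l m R)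
    (B : ι → Matrix n p R) : A ⊗ₖ ∑ i ∈ s, B i = ∑ i ∈ s, A ⊗ₖ B i :=
  map_sum ({ toFun := (A ⊗ₖ ·), map_zero' := kronecker_zero A, map_add' := kronecker_add A } :
    Matrix n p R →+ Matrix (l × n) (m × p) R) B s

theorem sum_kronecker [NonUnitalNonAssocSemiring R] (s : Finset ι) (A : ι → Matrix l m R)
    (B : Matrix n p R) : (∑ i ∈ s, A i) ⊗ₖ B = ∑ i ∈ s, A i ⊗ₖ B :=
  map_sum ({ toFun := (· ⊗ₖ B), map_zero' := zero_kronecker B, map_add' := (add_kronecker · · B) } :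
    Matrix l m R →+ Matrix (l × n) (m × p) R) A s

variable [CommSemiring R] [StarRing R] [DecidableEq l] [DecidableEq m] [Fintype n]

theorem conjTranspose_single_kronecker_mul_single_kronecker [Fintype l] (y : l) (x : m)
    (A B : Matrix n p R) :
    (single y x 1 ⊗ₖ A)ᴴ * (single y x 1 ⊗ₖ B) = single x x 1 ⊗ₖ (Aᴴ * B) := by
  rw [conjTranspose_kronecker, ← mul_kronecker_mul, conjTranspose_single, star_one,
    single_mul_single_same, one_mul]

theorem single_kronecker_mul_single_kronecker_mul_conjTranspose [Fintype m] (y : l) (x x' : m)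
    (A B : Matrix p n R) (ρ : Matrix n n R) :
    (single y x 1 ⊗ₖ A) * (single x' x' 1 ⊗ₖ ρ) * (single y x 1 ⊗ₖ B)ᴴ =
      if x = x' then single y y 1 ⊗ₖ (A * ρ * Bᴴ) else 0 := by
  rw [conjTranspose_kronecker, ← mul_kronecker_mul, ← mul_kronecker_mul, conjTranspose_single,
    star_one]
  split_ifs with h
  · subst h
    simp only [single_mul_single_same, one_mul]
  · rw [single_mul_single_of_ne 1 y x x' h, Matrix.zero_mul, zero_kronecker]

end Matrix

section MemoryChannel

variable {R X Y n : Type*} [CommSemiring R] [StarRing R] [Fintype X] [Fintype Y] [Fintype n]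
  [DecidableEq X] [DecidableEq Y] {κ : X → Y → Type*} [∀ x y, Fintype (κ x y)]

def memoryChannelKraus (F : ∀ x y, κ x y → Matrix n n R) (s : Σ x, Σ y, κ x y) :
    Matrix (Y × n) (X × n) R :=
  single s.2.1 s.1 1 ⊗ₖ F s.1 s.2.1 s.2.2

theorem sum_conjTranspose_memoryChannelKraus_mul [DecidableEq n] (F : ∀ x y, κ x y → Matrix n n R)
    (hF : ∀ x, ∑ y, ∑ k, (F x y k)ᴴ * F x y k = 1) :
    ∑ s, (memoryChannelKraus F s)ᴴ * memoryChannelKraus F s = 1 := by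
  simp only [Fintype.sum_sigma, memoryChannelKraus,
    conjTranspose_single_kronecker_mul_single_kronecker]
  simp only [← kronecker_sum, hF, ← sum_kronecker, sum_single_one, one_kronecker_one]

theorem sum_memoryChannelKraus_mul_single_kronecker_mul_conjTranspose
    (F : ∀ x y, κ x y → Matrix n n R) (x : X) (ρ : Matrix n n R) :
    ∑ s, memoryChannelKraus F s * (single x x 1 ⊗ₖ ρ) * (memoryChannelKraus F s)ᴴ =
      ∑ y, single y y 1 ⊗ₖ ∑ k, F x y k * ρ * (F x y k)ᴴ := by
  simp only [Fintype.sum_sigma, memoryChannelKraus,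
    single_kronecker_mul_single_kronecker_mul_conjTranspose, kronecker_sum]
  rw [Fintype.sum_eq_single x fun x' hx' => by simp only [hx', if_false, Finset.sum_const_zero]]
  simp only [if_true]

end MemoryChannel

theorem stmt16_general {X Y : Type} [Fintype X] [Fintype Y] [DecidableEq X] [DecidableEq Y]
    (d : ℕ)
    (κ : X → Y → Type) [∀ x y, Fintype (κ x y)]
    (Fk : ∀ (x : X) (y : Y), κ x y → Matrix (Fin d) (Fin d) ℂ)
    (hnorm : ∀ x : X, ∑ y : Y, ∑ k : κ x y, (Fk x y k)ᴴ * Fk x y k = 1) :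
    ∃ (M : ℕ) (G : Fin M → Matrix (Y × Fin d) (X × Fin d) ℂ),
      (∑ m : Fin M, (G m)ᴴ * G m = 1) ∧
      ∀ (x : X) (ρ : Matrix (Fin d) (Fin d) ℂ),
        ∑ m : Fin M, G m * (Matrix.single x x 1 ⊗ₖ ρ) * (G m)ᴴ =
          ∑ y : Y, Matrix.single y y 1 ⊗ₖ
            (∑ k : κ x y, Fk x y k * ρ * (Fk x y k)ᴴ) := by
  let e := (Fintype.equivFin (Σ x, Σ y, κ x y)).symm
  refine ⟨_, fun m => memoryChannelKraus Fk (e m), ?_, fun x ρ => ?_⟩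
  · rw [e.sum_comp fun s => (memoryChannelKraus Fk s)ᴴ * memoryChannelKraus Fk s]
    exact sum_conjTranspose_memoryChannelKraus_mul Fk hnorm
  · rw [e.sum_comp fun s => memoryChannelKraus Fk s * (single x x 1 ⊗ₖ ρ) *
      (memoryChannelKraus Fk s)ᴴ]
    exact sum_memoryChannelKraus_mul_single_kronecker_mul_conjTranspose Fk x ρ

/-- Every CC-QSC arises from a quantum channel with memory: given Kraus families
`{F_k^{y|x}}_k` of `d×d` matrices with `∑_{y}∑_k (F_k^{y|x})ᴴ F_k^{y|x} = I` for every
`x`, there is a finite Kraus family `{G_m}` of matrices from `X ⊗ ℂ^d` to `Y ⊗ ℂ^d` with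
`∑_m G_mᴴ G_m = I` (hence a CPTP map `M ↦ ∑_m G_m M G_mᴴ`) realizing the CC-QSC on the
orthonormal ensemble `{|x⟩⟨x|}` and the projective measurement `{|y⟩⟨y|}`. -/
theorem stmt16 {X Y : Type} [Fintype X] [Fintype Y] [DecidableEq X] [DecidableEq Y]
    (d : ℕ) (hd : 1 ≤ d)
    (κ : X → Y → Type) [∀ x y, Fintype (κ x y)]
    (Fk : ∀ (x : X) (y : Y), κ x y → Matrix (Fin d) (Fin d) ℂ)
    (hnorm : ∀ x : X, ∑ y : Y, ∑ k : κ x y, (Fk x y k)ᴴ * Fk x y k = 1) :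
    ∃ (M : ℕ) (G : Fin M → Matrix (Y × Fin d) (X × Fin d) ℂ),
      (∑ m : Fin M, (G m)ᴴ * G m = 1) ∧
      ∀ (x : X) (ρ : Matrix (Fin d) (Fin d) ℂ),
        ∑ m : Fin M, G m * (Matrix.single x x 1 ⊗ₖ ρ) * (G m)ᴴ =
          ∑ y : Y, Matrix.single y y 1 ⊗ₖ
            (∑ k : κ x y, Fk x y k * ρ * (Fk x y k)ᴴ) :=
  stmt16_general d κ Fk hnorm
end

section
/- (Information rate of an indecomposable CC-QSC is independent of the initial density operator.) Let a CC-QSC {N^{y|x}} with finite alphabets X, Y and memory dimension d be given, and let Q be a PMF on X. For a d×d density matrix ρ₀ and n ≥ 1, define the joint PMF on Xⁿ×Yⁿ by P_{ρ₀}(x₁…x_n, y₁…y_n) := (∏_{ℓ=1}^{n} Q(x_ℓ)) · tr(N^{y_n|x_n}(⋯ N^{y_1|x_1}(ρ₀) ⋯)), and set I⁽ⁿ⁾(ρ₀) := (1/n)·I(P_{ρ₀}), the normalized mutual information between the Xⁿ-block and the Yⁿ-block. Call the CC-QSC indecomposable if for all density matrices α₀, β₀ and every ε > 0 there exists N such that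 for all n ≥ N and all (x₁,…,x_n) ∈ Xⁿ one has ‖α_n^{(x)} − β_n^{(x)}‖₁ < ε, where α_n^{(x)} := ∑_{(y₁,…,y_n)∈Yⁿ} N^{y_n|x_n}(⋯ N^{y_1|x_1}(α₀) ⋯) and β_n^{(x)} is defined analogously from β₀. Then, if the CC-QSC is indecomposable, for every pair of density matrices α₀, β₀ the difference I⁽ⁿ⁾(α₀) − I⁽ⁿ⁾(β₀) tends to 0 as n → ∞. -/
open Matrix Finset
open scoped ComplexOrder

/-- `evolve Nmap ρ₀ n x y = N^{y_n|x_n}(⋯ N^{y_1|x_1}(ρ₀) ⋯)`: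
the iterated application of the channel maps along the input/output sequences,
with `N^{y_1|x_1}` applied first. -/
noncomputable def evolve {X Y : Type} {d : ℕ}
    (Nmap : X → Y → Matrix (Fin d) (Fin d) ℂ → Matrix (Fin d) (Fin d) ℂ)
    (ρ0 : Matrix (Fin d) (Fin d) ℂ) :
    (n : ℕ) → (Fin n → X) → (Fin n → Y) → Matrix (Fin d) (Fin d) ℂ
  | 0, _, _ => ρ0
  | n + 1, x, y =>
      Nmap (x (Fin.last n)) (y (Fin.last n))
        (evolve Nmap ρ0 n (fun i => x i.castSucc) (fun i => y i.castSucc))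

/-- The trace norm `‖M‖₁ = (1/2)·tr √(MᴴM)` of a complex matrix. -/
noncomputable def trNorm {n : Type*} [Fintype n] [DecidableEq n] (M : Matrix n n ℂ) : ℝ :=
  (((Matrix.posSemidef_conjTranspose_mul_self M).1.eigenvectorUnitary.1 *
      diagonal (((↑) : ℝ → ℂ) ∘ (√·) ∘ (Matrix.posSemidef_conjTranspose_mul_self M).1.eigenvalues) *
      (star (Matrix.posSemidef_conjTranspose_mul_self M).1.eigenvectorUnitary : Matrix n n ℂ)).trace).re / 2

/-- The mutual information of a joint PMF `P` on a finite product set, with the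
`0 · log 0 = 0` convention. -/
noncomputable def mutInfo {A B : Type*} [Fintype A] [Fintype B] (P : A → B → ℝ) : ℝ :=
  ∑ a : A, ∑ b : B,
    P a b * Real.log (P a b / ((∑ b' : B, P a b') * (∑ a' : A, P a' b)))

/-!
Write `I(P) = H(inputs) + H(outputs) - H(inputs, outputs)`; the input marginal is `Qⁿ` whatever
the initial state. Split the `n = m + k` outputs into the first `m` and the last `k`. Since
`H(marginal) ≤ H(joint) ≤ H(marginal) + log |Y|ᵐ`, forgetting the first `m` outputs changes the
mutual information by at most `m log |Y|`. Given the inputs, the last `k` outputs arise by running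
the channel from the averaged states `α_m^{(x)}`, `β_m^{(x)}`, which are `ε`-close in trace norm
once `m` is large (indecomposability). Positive trace-preserving dynamics does not increase this
distance, so the two laws of (inputs, last `k` outputs) are `2ε`-close in total variation, and
the Fannes-type bound `|H(p) - H(q)| ≤ ‖p - q‖₁ log |S| + 1` makes their mutual informations
differ by `O(ε n log (|X| |Y|) + 1)`. Dividing by `n`, `|I⁽ⁿ⁾(α₀) - I⁽ⁿ⁾(β₀)| = O(m / n + ε)`.
-/

open Real

section Entropy

variable {S : Type*} [Fintype S]

noncomputable def entropy (p : S → ℝ) : ℝ := ∑ s, negMulLog (p s)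

lemma negMulLog_add_le {a b : ℝ} (ha : 0 ≤ a) (hb : 0 ≤ b) :
    negMulLog (a + b) ≤ negMulLog a + negMulLog b := by
  rcases ha.eq_or_lt with rfl | ha
  · simp
  rcases hb.eq_or_lt with rfl | hb
  · simp
  have hla : log a ≤ log (a + b) := log_le_log ha (by linarith)
  have hlb : log b ≤ log (a + b) := log_le_log hb (by linarith)
  simp only [negMulLog]
  nlinarith

lemma negMulLog_sum_le (p : S → ℝ) (hp : ∀ s, 0 ≤ p s) :
    negMulLog (∑ s, p s) ≤ entropy p := by
  classical
  suffices ∀ t : Finset S, negMulLog (∑ s ∈ t, p s) ≤ ∑ s ∈ t, negMulLog (p s) from this _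
  intro t
  induction t using Finset.induction_on with
  | empty => simp
  | insert s t hs ih =>
    rw [Finset.sum_insert hs, Finset.sum_insert hs]
    exact (negMulLog_add_le (hp s) (Finset.sum_nonneg fun i _ => hp i)).trans (by linarith)

lemma entropy_le_negMulLog_sum_add (p : S → ℝ) (hp : ∀ s, 0 ≤ p s) :
    entropy p ≤ negMulLog (∑ s, p s) + (∑ s, p s) * log (Fintype.card S) := by
  rcases isEmpty_or_nonempty S with hS | hS
  · simp [entropy]
  set N : ℝ := (Fintype.card S : ℝ)
  have hN : 0 < N := by positivity
  calc entropy p = N * ∑ s, N⁻¹ • negMulLog (p s) := by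
        simp only [entropy, smul_eq_mul, ← Finset.mul_sum, mul_inv_cancel_left₀ hN.ne']
    _ ≤ N * negMulLog (∑ s, N⁻¹ • p s) := by
        gcongr
        exact concaveOn_negMulLog.le_map_sum (fun _ _ => by positivity)
          (by simp [Finset.card_univ, N, hN.ne']) fun s _ => Set.mem_Ici.2 (hp s)
    _ = negMulLog (∑ s, p s) + (∑ s, p s) * log N := by
        rw [← Finset.smul_sum, smul_eq_mul, negMulLog_mul, negMulLog, log_inv]
        field_simp
        ring

section Marginal

variable {C D : Type*} [Fintype C] [Fintype D]

lemma entropy_eq_sum_entropy (p : C × D → ℝ) :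
    entropy p = ∑ e, entropy (fun c => p (c, e)) :=
  Fintype.sum_prod_type_right _

lemma entropy_marginal_le (p : C × D → ℝ) (hp : ∀ b, 0 ≤ p b) :
    entropy (fun e => ∑ c, p (c, e)) ≤ entropy p := by
  rw [entropy_eq_sum_entropy]
  exact Finset.sum_le_sum fun e _ => negMulLog_sum_le _ fun c => hp (c, e)

lemma entropy_le_entropy_marginal_add (p : C × D → ℝ) (hp : ∀ b, 0 ≤ p b) :
    entropy p ≤ entropy (fun e => ∑ c, p (c, e)) + (∑ b, p b) * log (Fintype.card C) := by
  rw [entropy_eq_sum_entropy, Fintype.sum_prod_type_right, Finset.sum_mul, entropy,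
    ← Finset.sum_add_distrib]
  exact Finset.sum_le_sum fun e _ => entropy_le_negMulLog_sum_add _ fun c => hp (c, e)

end Marginal

lemma abs_negMulLog_sub_le {a b : ℝ} (ha : a ∈ Set.Icc (0 : ℝ) 1) (hb : b ∈ Set.Icc (0 : ℝ) 1) :
    |negMulLog a - negMulLog b| ≤ negMulLog |a - b| + |a - b| := by
  wlog hab : a ≤ b generalizing a b
  · rw [abs_sub_comm, abs_sub_comm a]
    exact this hb ha (le_of_not_ge hab)
  obtain ⟨ha0, -⟩ := ha
  obtain ⟨hb0, hb1⟩ := hb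
  rw [abs_sub_comm a b, abs_of_nonneg (sub_nonneg.2 hab)]
  have hsub := negMulLog_add_le ha0 (sub_nonneg.2 hab)
  rw [add_sub_cancel] at hsub
  have hle : negMulLog a - negMulLog b ≤ b - a := by
    rcases ha0.eq_or_lt with rfl | ha0
    · simp only [negMulLog_zero, zero_sub, sub_zero]
      linarith [negMulLog_nonneg hb0 hb1]
    -- `-a log a + b log b = a (log b - log a) + (b - a) log b`, and `a (log b - log a) ≤ b - a`
    have hlog : a * log (b / a) ≤ b - a := by
      have := log_le_sub_one_of_pos (div_pos (ha0.trans_le hab) ha0)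
      calc a * log (b / a) ≤ a * (b / a - 1) := by gcongr
        _ = b - a := by field_simp
    rw [log_div (ha0.trans_le hab).ne' ha0.ne'] at hlog
    have := mul_nonpos_of_nonneg_of_nonpos (sub_nonneg.2 hab) (log_nonpos hb0 hb1)
    simp only [negMulLog]
    nlinarith
  have := negMulLog_nonneg (sub_nonneg.2 hab) (by linarith)
  rw [abs_le]
  constructor <;> linarith

lemma le_one_of_sum_eq_one {p : S → ℝ} (hp : ∀ s, 0 ≤ p s)
    (hp1 : ∑ s, p s = 1) (s : S) : p s ≤ 1 :=
  hp1 ▸ Finset.single_le_sum (fun i _ => hp i) (Finset.mem_univ s)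

lemma abs_entropy_sub_le (p q : S → ℝ)
    (hp : ∀ s, 0 ≤ p s) (hp1 : ∑ s, p s = 1) (hq : ∀ s, 0 ≤ q s) (hq1 : ∑ s, q s = 1) :
    |entropy p - entropy q| ≤ (∑ s, |p s - q s|) * log (Fintype.card S) + 1 := by
  set δ := ∑ s, |p s - q s|
  have hδ : 0 ≤ δ := Finset.sum_nonneg fun s _ => abs_nonneg _
  calc |entropy p - entropy q| ≤ ∑ s, |negMulLog (p s) - negMulLog (q s)| := by
        rw [entropy, entropy, ← Finset.sum_sub_distrib]
        exact Finset.abs_sum_le_sum_abs _ _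
    _ ≤ ∑ s, (negMulLog |p s - q s| + |p s - q s|) :=
        Finset.sum_le_sum fun s _ => abs_negMulLog_sub_le ⟨hp s, le_one_of_sum_eq_one hp hp1 s⟩
          ⟨hq s, le_one_of_sum_eq_one hq hq1 s⟩
    _ = entropy (fun s => |p s - q s|) + δ := Finset.sum_add_distrib
    _ ≤ negMulLog δ + δ * log (Fintype.card S) + δ := by
        gcongr
        exact entropy_le_negMulLog_sum_add _ fun s => abs_nonneg _
    _ ≤ δ * log (Fintype.card S) + 1 := by
        linarith [negMulLog_le_one_sub_self hδ]

end Entropy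

section MutualInformation

variable {A B : Type*} [Fintype A] [Fintype B]

lemma mutInfo_eq_entropy (P : A → B → ℝ) (hP : ∀ a b, 0 ≤ P a b) :
    mutInfo P = entropy (fun a => ∑ b, P a b) + entropy (fun b => ∑ a, P a b)
      - ∑ a, entropy (P a) := by
  have key : ∀ a b, P a b * log (P a b / ((∑ b', P a b') * ∑ a', P a' b)) =
      -negMulLog (P a b) - P a b * log (∑ b', P a b') - P a b * log (∑ a', P a' b) := by
    intro a b
    rcases (hP a b).eq_or_lt with h | h
    · simp [← h]
    have hA : 0 < ∑ b', P a b' :=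
      h.trans_le (Finset.single_le_sum (fun b' _ => hP a b') (Finset.mem_univ b))
    have hB : 0 < ∑ a', P a' b :=
      h.trans_le (Finset.single_le_sum (fun a' _ => hP a' b) (Finset.mem_univ a))
    rw [log_div h.ne' (mul_pos hA hB).ne', log_mul hA.ne' hB.ne', negMulLog]
    ring
  simp only [mutInfo, key, Finset.sum_sub_distrib, ← Finset.sum_mul, entropy, negMulLog]
  rw [Finset.sum_comm (f := fun a b => P a b * log (∑ a', P a' b))]
  simp only [← Finset.sum_mul, neg_mul, Finset.sum_neg_distrib]
  ring

lemma mutInfo_comp_equiv {B' : Type*} [Fintype B'] (P : A → B → ℝ) (e : B' ≃ B) :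
    mutInfo (fun a b' => P a (e b')) = mutInfo P := by
  simp only [mutInfo, e.sum_comp (P _)]
  exact Finset.sum_congr rfl fun a _ =>
    e.sum_comp fun b => P a b * log (P a b / ((∑ b', P a b') * ∑ a', P a' b))

lemma nonempty_of_sum_sum_eq_one {P : A → B → ℝ} (hP1 : ∑ a, ∑ b, P a b = 1) :
    Nonempty A ∧ Nonempty B := by
  constructor <;> by_contra h <;> simp [not_nonempty_iff.1 h] at hP1

variable {C D : Type*} [Fintype C] [Fintype D]

lemma abs_mutInfo_sub_mutInfo_marginal_le (P : A → C × D → ℝ) (hP : ∀ a b, 0 ≤ P a b)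
    (hP1 : ∑ a, ∑ b, P a b = 1) :
    |mutInfo P - mutInfo (fun a e => ∑ c, P a (c, e))| ≤ log (Fintype.card C) := by
  have hPout : ∀ b, 0 ≤ ∑ a, P a b := fun b => Finset.sum_nonneg fun a _ => hP a b
  have hjoint_le : ∑ a, entropy (fun e => ∑ c, P a (c, e)) ≤ ∑ a, entropy (P a) :=
    Finset.sum_le_sum fun a _ => entropy_marginal_le _ (hP a)
  have hle_joint : ∑ a, entropy (P a) ≤ ∑ a, entropy (fun e => ∑ c, P a (c, e)) +
      log (Fintype.card C) := by
    calc ∑ a, entropy (P a)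
        ≤ ∑ a, (entropy (fun e => ∑ c, P a (c, e)) + (∑ b, P a b) * log (Fintype.card C)) :=
          Finset.sum_le_sum fun a _ => entropy_le_entropy_marginal_add _ (hP a)
      _ = _ := by rw [Finset.sum_add_distrib, ← Finset.sum_mul, hP1, one_mul]
  have hout_le := entropy_marginal_le _ hPout
  have hle_out := entropy_le_entropy_marginal_add _ hPout
  rw [Finset.sum_comm, hP1, one_mul] at hle_out
  have hmargA : (fun a => ∑ e, ∑ c, P a (c, e)) = fun a => ∑ b, P a b :=
    funext fun a => (Fintype.sum_prod_type_right _).symm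
  have hmargD : (fun e => ∑ a, ∑ c, P a (c, e)) = fun e => ∑ c, ∑ a, P a (c, e) :=
    funext fun e => Finset.sum_comm
  rw [mutInfo_eq_entropy _ hP, mutInfo_eq_entropy _ fun a e => Finset.sum_nonneg fun c _ =>
    hP a (c, e), hmargA, hmargD, abs_le]
  constructor <;> linarith

lemma abs_mutInfo_sub_le (P P' : A → D → ℝ) (hP : ∀ a e, 0 ≤ P a e) (hP1 : ∑ a, ∑ e, P a e = 1)
    (hP' : ∀ a e, 0 ≤ P' a e) (hP'1 : ∑ a, ∑ e, P' a e = 1)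
    (hmarg : ∀ a, ∑ e, P a e = ∑ e, P' a e) :
    |mutInfo P - mutInfo P'| ≤
      2 * ((∑ a, ∑ e, |P a e - P' a e|) * (log (Fintype.card A) + log (Fintype.card D)) + 1) := by
  obtain ⟨hA, hD⟩ := nonempty_of_sum_sum_eq_one hP1
  set δ := ∑ a, ∑ e, |P a e - P' a e|
  have hlog : log (Fintype.card (A × D)) = log (Fintype.card A) + log (Fintype.card D) := by
    rw [Fintype.card_prod, Nat.cast_mul, log_mul (by positivity) (by positivity)]
  have hjoint : |∑ a, entropy (P a) - ∑ a, entropy (P' a)| ≤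
      δ * (log (Fintype.card A) + log (Fintype.card D)) + 1 := by
    have := abs_entropy_sub_le (fun t : A × D => P t.1 t.2) (fun t => P' t.1 t.2)
      (fun t => hP _ _) (by rwa [Fintype.sum_prod_type]) (fun t => hP' _ _)
      (by rwa [Fintype.sum_prod_type])
    simpa only [entropy, Fintype.sum_prod_type, hlog] using this
  have hout : |entropy (fun e => ∑ a, P a e) - entropy (fun e => ∑ a, P' a e)| ≤
      δ * (log (Fintype.card A) + log (Fintype.card D)) + 1 := by
    refine (abs_entropy_sub_le _ _ (fun e => Finset.sum_nonneg fun a _ => hP a e)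
      (by rwa [Finset.sum_comm]) (fun e => Finset.sum_nonneg fun a _ => hP' a e)
      (by rwa [Finset.sum_comm])).trans ?_
    have hδ : ∑ e, |∑ a, P a e - ∑ a, P' a e| ≤ δ :=
      calc ∑ e, |∑ a, P a e - ∑ a, P' a e| ≤ ∑ e, ∑ a, |P a e - P' a e| :=
            Finset.sum_le_sum fun e _ => by
              rw [← Finset.sum_sub_distrib]; exact Finset.abs_sum_le_sum_abs _ _
        _ = δ := Finset.sum_comm
    have := log_natCast_nonneg (Fintype.card A)
    gcongr
    linarith
  rw [mutInfo_eq_entropy _ hP, mutInfo_eq_entropy _ hP', funext hmarg]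
  rw [abs_le] at hjoint hout ⊢
  constructor <;> linarith

lemma abs_mutInfo_sub_le_of_marginal (P P' : A → C × D → ℝ) (hP : ∀ a b, 0 ≤ P a b)
    (hP1 : ∑ a, ∑ b, P a b = 1) (hP' : ∀ a b, 0 ≤ P' a b) (hP'1 : ∑ a, ∑ b, P' a b = 1)
    (hmarg : ∀ a, ∑ b, P a b = ∑ b, P' a b) :
    |mutInfo P - mutInfo P'| ≤ 2 * log (Fintype.card C) +
      2 * ((∑ a, ∑ e, |∑ c, P a (c, e) - ∑ c, P' a (c, e)|) *
        (log (Fintype.card A) + log (Fintype.card D)) + 1) := by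
  have hmarg' : ∀ (P : A → C × D → ℝ) a, ∑ e, ∑ c, P a (c, e) = ∑ b, P a b :=
    fun P a => (Fintype.sum_prod_type_right _).symm
  have hnonneg : ∀ P : A → C × D → ℝ, (∀ a b, 0 ≤ P a b) → ∀ a e, 0 ≤ ∑ c, P a (c, e) :=
    fun P hP a e => Finset.sum_nonneg fun c _ => hP a (c, e)
  have hdrop := abs_mutInfo_sub_mutInfo_marginal_le P hP hP1
  have hdrop' := abs_mutInfo_sub_mutInfo_marginal_le P' hP' hP'1
  have hcont := abs_mutInfo_sub_le _ _ (hnonneg P hP) (by simp only [hmarg', hP1])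
    (hnonneg P' hP') (by simp only [hmarg', hP'1]) (by simpa only [hmarg'] using hmarg)
  rw [abs_le] at hdrop hdrop' hcont ⊢
  constructor <;> linarith

end MutualInformation

section Evolve

variable {X Y : Type} {d : ℕ}

lemma evolve_snoc (Nmap : X → Y → Matrix (Fin d) (Fin d) ℂ → Matrix (Fin d) (Fin d) ℂ)
    (ρ : Matrix (Fin d) (Fin d) ℂ) {n : ℕ} (x : Fin n → X) (y : Fin n → Y) (s : X) (t : Y) :
    evolve Nmap ρ (n + 1) (Fin.snoc x s) (Fin.snoc y t) = Nmap s t (evolve Nmap ρ n x y) := by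
  simp only [evolve, Fin.snoc_last, Fin.snoc_castSucc]

lemma evolve_append (Nmap : X → Y → Matrix (Fin d) (Fin d) ℂ → Matrix (Fin d) (Fin d) ℂ)
    (ρ : Matrix (Fin d) (Fin d) ℂ) {m : ℕ} (a : Fin m → X) (c : Fin m → Y) :
    ∀ {k : ℕ} (b : Fin k → X) (e : Fin k → Y),
      evolve Nmap ρ (m + k) (Fin.append a b) (Fin.append c e) =
        evolve Nmap (evolve Nmap ρ m a c) k b e
  | 0, b, e => by
    rw [Fin.append_right_nil a b rfl, Fin.append_right_nil c e rfl]
    rfl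
  | k + 1, b, e => by
    rw [← Fin.snoc_init_self b, ← Fin.snoc_init_self e, Fin.append_snoc, Fin.append_snoc,
      evolve_snoc, ← evolve_append Nmap ρ a c]
    exact evolve_snoc Nmap ρ _ _ _ _

lemma evolve_posSemidef (Nmap : X → Y → Matrix (Fin d) (Fin d) ℂ → Matrix (Fin d) (Fin d) ℂ)
    (hN : ∀ x y ρ, ρ.PosSemidef → (Nmap x y ρ).PosSemidef) {ρ : Matrix (Fin d) (Fin d) ℂ}
    (hρ : ρ.PosSemidef) : ∀ {n : ℕ} (x : Fin n → X) (y : Fin n → Y),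
      (evolve Nmap ρ n x y).PosSemidef
  | 0, _, _ => hρ
  | _ + 1, _, _ => hN _ _ _ (evolve_posSemidef Nmap hN hρ _ _)

lemma sum_trace_evolve [Fintype Y]
    (Nmap : X → Y → Matrix (Fin d) (Fin d) ℂ → Matrix (Fin d) (Fin d) ℂ)
    (hN : ∀ x ρ, ∑ y, (Nmap x y ρ).trace = ρ.trace) (ρ : Matrix (Fin d) (Fin d) ℂ) :
    ∀ {n : ℕ} (x : Fin n → X), ∑ y, (evolve Nmap ρ n x y).trace = ρ.trace
  | 0, _ => by simp [evolve]
  | n + 1, x => by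
    rw [← (Fin.snocEquiv fun _ => Y).sum_comp, Fintype.sum_prod_type_right,
      ← Fin.snoc_init_self x]
    simp only [Fin.snocEquiv, Equiv.coe_fn_mk, evolve_snoc, hN, sum_trace_evolve Nmap hN ρ]

end Evolve

open scoped MatrixOrder in
lemma trNorm_eq_re_trace_abs {n : Type*} [Fintype n] [DecidableEq n] (M : Matrix n n ℂ) :
    trNorm M = (CFC.abs M).trace.re / 2 := by
  have h : (star M * M).PosSemidef := Matrix.posSemidef_conjTranspose_mul_self M
  rw [CFC.abs, CFC.sqrt_eq_real_sqrt _ (Matrix.nonneg_iff_posSemidef.2 h), cfcₙ_eq_cfc,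
    h.1.cfc_eq, Matrix.IsHermitian.cfc, Unitary.conjStarAlgAut_apply]
  rfl

lemma Matrix.PosSemidef.re_trace_nonneg {n : Type*} [Fintype n] {M : Matrix n n ℂ}
    (hM : M.PosSemidef) : 0 ≤ M.trace.re :=
  Complex.nonneg_iff.1 hM.trace_nonneg |>.1

section AdditiveEvolve

variable {X Y : Type} {d : ℕ}
  (Φ : X → Y → Matrix (Fin d) (Fin d) ℂ →+ Matrix (Fin d) (Fin d) ℂ)

lemma evolve_sum {ι : Type*} (s : Finset ι) (ρ : ι → Matrix (Fin d) (Fin d) ℂ) :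
    ∀ {n : ℕ} (x : Fin n → X) (y : Fin n → Y),
      evolve (fun x y => Φ x y) (∑ i ∈ s, ρ i) n x y =
        ∑ i ∈ s, evolve (fun x y => Φ x y) (ρ i) n x y
  | 0, _, _ => rfl
  | _ + 1, _, _ => by simp only [evolve, evolve_sum s ρ, map_sum]

lemma evolve_sub (ρ σ : Matrix (Fin d) (Fin d) ℂ) :
    ∀ {n : ℕ} (x : Fin n → X) (y : Fin n → Y),
      evolve (fun x y => Φ x y) (ρ - σ) n x y =
        evolve (fun x y => Φ x y) ρ n x y - evolve (fun x y => Φ x y) σ n x y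
  | 0, _, _ => rfl
  | _ + 1, _, _ => by simp only [evolve, evolve_sub ρ σ, map_sub]

open scoped MatrixOrder in
/-- Splitting `Δ = Δ⁺ - Δ⁻`, positivity and trace preservation bound the total variation of the
output statistics by `tr Δ⁺ + tr Δ⁻ = tr |Δ|`. -/
lemma sum_abs_re_trace_evolve_le [Fintype Y]
    (hpos : ∀ x y ρ, ρ.PosSemidef → (Φ x y ρ).PosSemidef)
    (htr : ∀ x ρ, ∑ y, (Φ x y ρ).trace = ρ.trace)
    {Δ : Matrix (Fin d) (Fin d) ℂ} (hΔ : Δ.IsHermitian) {n : ℕ} (x : Fin n → X) :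
    ∑ y, |(evolve (fun x y => Φ x y) Δ n x y).trace.re| ≤ 2 * trNorm Δ := by
  have hΔpos : (Δ⁺).PosSemidef := Matrix.nonneg_iff_posSemidef.1 (CFC.posPart_nonneg Δ)
  have hΔneg : (Δ⁻).PosSemidef := Matrix.nonneg_iff_posSemidef.1 (CFC.negPart_nonneg Δ)
  have hre : ∀ {ρ} (hρ : ρ.PosSemidef) y,
      0 ≤ (evolve (fun x y => Φ x y) ρ n x y).trace.re := fun hρ y =>
    (evolve_posSemidef _ hpos hρ x y).re_trace_nonneg
  have hsum : ∀ ρ : Matrix (Fin d) (Fin d) ℂ,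
      ∑ y, (evolve (fun x y => Φ x y) ρ n x y).trace.re = ρ.trace.re := fun ρ => by
    rw [← Complex.re_sum, sum_trace_evolve _ htr]
  calc ∑ y, |(evolve (fun x y => Φ x y) Δ n x y).trace.re|
      ≤ ∑ y, ((evolve (fun x y => Φ x y) Δ⁺ n x y).trace.re +
          (evolve (fun x y => Φ x y) Δ⁻ n x y).trace.re) := by
        refine Finset.sum_le_sum fun y _ => ?_
        have hsplit := evolve_sub Φ Δ⁺ Δ⁻ x y
        rw [CFC.posPart_sub_negPart Δ hΔ] at hsplit
        have := hre hΔpos y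
        have := hre hΔneg y
        rw [hsplit, Matrix.trace_sub, Complex.sub_re, abs_le]
        constructor <;> linarith
    _ = (CFC.abs Δ).trace.re := by
        rw [Finset.sum_add_distrib, hsum, hsum, ← Complex.add_re, ← Matrix.trace_add,
          CFC.posPart_add_negPart Δ hΔ]
    _ = 2 * trNorm Δ := by rw [trNorm_eq_re_trace_abs]; ring

end AdditiveEvolve

section Kraus

variable {n ι : Type*} [Fintype n] [Fintype ι]

noncomputable def krausMap (F : ι → Matrix n n ℂ) : Matrix n n ℂ →+ Matrix n n ℂ where
  toFun ρ := ∑ k, F k * ρ * (F k)ᴴ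
  map_zero' := by simp
  map_add' ρ σ := by simp only [Matrix.mul_add, Matrix.add_mul, Finset.sum_add_distrib]

lemma krausMap_apply (F : ι → Matrix n n ℂ) (ρ : Matrix n n ℂ) :
    krausMap F ρ = ∑ k, F k * ρ * (F k)ᴴ :=
  rfl

lemma krausMap_posSemidef (F : ι → Matrix n n ℂ) {ρ : Matrix n n ℂ} (hρ : ρ.PosSemidef) :
    (krausMap F ρ).PosSemidef :=
  Matrix.posSemidef_sum _ fun k _ => hρ.mul_mul_conjTranspose_same (F k)

lemma sum_trace_krausMap [DecidableEq n] {Y : Type*} [Fintype Y] {κ : Y → Type*}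
    [∀ y, Fintype (κ y)] (F : ∀ y, κ y → Matrix n n ℂ) (hF : ∑ y, ∑ k, (F y k)ᴴ * F y k = 1)
    (ρ : Matrix n n ℂ) :
    ∑ y, (krausMap (F y) ρ).trace = ρ.trace := by
  calc ∑ y, (krausMap (F y) ρ).trace = ∑ y, ∑ k, ((F y k)ᴴ * F y k * ρ).trace := by
        simp only [krausMap_apply, Matrix.trace_sum, Matrix.trace_mul_cycle _ ρ]
    _ = ((∑ y, ∑ k, (F y k)ᴴ * F y k) * ρ).trace := by
        simp only [Finset.sum_mul, Matrix.trace_sum]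
    _ = ρ.trace := by rw [hF, one_mul]

end Kraus

lemma sum_prod_eq_one {X : Type*} [Fintype X] {Q : X → ℝ} (hQ1 : ∑ x, Q x = 1) (n : ℕ) :
    ∑ x : Fin n → X, ∏ ℓ, Q (x ℓ) = 1 := by
  rw [← Fintype.sum_pow, hQ1, one_pow]

section JointDistribution

variable {X Y : Type} {d : ℕ}
  (Φ : X → Y → Matrix (Fin d) (Fin d) ℂ →+ Matrix (Fin d) (Fin d) ℂ) (Q : X → ℝ)

/-- The joint law `P_{ρ₀}` of `n` i.i.d. `Q`-distributed inputs and the resulting outputs. -/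
noncomputable def jointDist (ρ : Matrix (Fin d) (Fin d) ℂ) (n : ℕ) (x : Fin n → X)
    (y : Fin n → Y) : ℝ :=
  (∏ ℓ, Q (x ℓ)) * (evolve (fun x y => Φ x y) ρ n x y).trace.re

variable {Φ Q}

lemma jointDist_nonneg (hpos : ∀ x y ρ, ρ.PosSemidef → (Φ x y ρ).PosSemidef)
    (hQ : ∀ x, 0 ≤ Q x) {ρ : Matrix (Fin d) (Fin d) ℂ} (hρ : ρ.PosSemidef) {n : ℕ}
    (x : Fin n → X) (y : Fin n → Y) : 0 ≤ jointDist Φ Q ρ n x y :=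
  mul_nonneg (Finset.prod_nonneg fun _ _ => hQ _)
    (evolve_posSemidef _ hpos hρ x y).re_trace_nonneg

lemma sum_jointDist [Fintype Y] (htr : ∀ x ρ, ∑ y, (Φ x y ρ).trace = ρ.trace)
    {ρ : Matrix (Fin d) (Fin d) ℂ} (hρ : ρ.trace = 1) {n : ℕ} (x : Fin n → X) :
    ∑ y, jointDist Φ Q ρ n x y = ∏ ℓ, Q (x ℓ) := by
  simp only [jointDist, ← Finset.mul_sum, ← Complex.re_sum, sum_trace_evolve _ htr, hρ,
    Complex.one_re, mul_one]

lemma sum_jointDist_append [Fintype Y] {ρ : Matrix (Fin d) (Fin d) ℂ} {m k : ℕ}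
    (x : Fin (m + k) → X) (e : Fin k → Y) :
    ∑ c, jointDist Φ Q ρ (m + k) x (Fin.append c e) = (∏ ℓ, Q (x ℓ)) *
      (evolve (fun x y => Φ x y)
        (∑ c, evolve (fun x y => Φ x y) ρ m (fun i => x (Fin.castAdd k i)) c)
        k (fun i => x (Fin.natAdd m i)) e).trace.re := by
  have hsplit : ∀ c, evolve (fun x y => Φ x y) ρ (m + k) x (Fin.append c e) =
      evolve (fun x y => Φ x y) (evolve (fun x y => Φ x y) ρ m (fun i => x (Fin.castAdd k i)) c)
        k (fun i => x (Fin.natAdd m i)) e := fun c => by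
    conv_lhs => rw [← Fin.append_castAdd_natAdd (f := x)]
    exact evolve_append _ ρ _ c _ e
  simp only [jointDist, hsplit, evolve_sum, Matrix.trace_sum, Complex.re_sum, Finset.mul_sum]

end JointDistribution

section MainEstimate

variable {X Y : Type} [Fintype X] [Fintype Y] {d : ℕ}
  {Φ : X → Y → Matrix (Fin d) (Fin d) ℂ →+ Matrix (Fin d) (Fin d) ℂ} {Q : X → ℝ}
  (hpos : ∀ x y ρ, ρ.PosSemidef → (Φ x y ρ).PosSemidef)
  (htr : ∀ x ρ, ∑ y, (Φ x y ρ).trace = ρ.trace)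
  (hQ : ∀ x, 0 ≤ Q x) (hQ1 : ∑ x, Q x = 1)
  {α β : Matrix (Fin d) (Fin d) ℂ} (hα : α.PosSemidef) (hα1 : α.trace = 1)
  (hβ : β.PosSemidef) (hβ1 : β.trace = 1)
include hpos htr hQ hQ1 hα hβ

/-- The statistics of the last `k` outputs depend on the initial states only through the
averaged states after the first `m` steps. -/
lemma sum_abs_sum_jointDist_append_sub_le {m k : ℕ} {δ : ℝ}
    (hδ : ∀ x : Fin m → X, trNorm (∑ c, evolve (fun x y => Φ x y) α m x c -
      ∑ c, evolve (fun x y => Φ x y) β m x c) ≤ δ) :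
    ∑ x : Fin (m + k) → X, ∑ e : Fin k → Y, |∑ c, jointDist Φ Q α (m + k) x (Fin.append c e) -
      ∑ c, jointDist Φ Q β (m + k) x (Fin.append c e)| ≤ 2 * δ := by
  have hΔ : ∀ x : Fin m → X, (∑ c, evolve (fun x y => Φ x y) α m x c -
      ∑ c, evolve (fun x y => Φ x y) β m x c).IsHermitian := fun x =>
    (Matrix.posSemidef_sum Finset.univ fun c _ => evolve_posSemidef _ hpos hα x c).isHermitian.sub
      (Matrix.posSemidef_sum Finset.univ fun c _ => evolve_posSemidef _ hpos hβ x c).isHermitian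
  calc _ ≤ ∑ x : Fin (m + k) → X, (∏ ℓ, Q (x ℓ)) * (2 * δ) := by
        refine Finset.sum_le_sum fun x _ => ?_
        simp only [sum_jointDist_append, ← mul_sub, ← Complex.sub_re, ← Matrix.trace_sub,
          ← evolve_sub, abs_mul, abs_of_nonneg (Finset.prod_nonneg fun ℓ _ => hQ (x ℓ)),
          ← Finset.mul_sum]
        gcongr
        · exact Finset.prod_nonneg fun ℓ _ => hQ (x ℓ)
        exact (sum_abs_re_trace_evolve_le Φ hpos htr (hΔ _) _).trans
          (by linarith [hδ fun i => x (Fin.castAdd k i)])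
    _ = 2 * δ := by rw [← Finset.sum_mul, sum_prod_eq_one hQ1, one_mul]

include hα1 hβ1 in
lemma abs_mutInfo_jointDist_sub_le {m k : ℕ} {δ : ℝ}
    (hδ : ∀ x : Fin m → X, trNorm (∑ c, evolve (fun x y => Φ x y) α m x c -
      ∑ c, evolve (fun x y => Φ x y) β m x c) ≤ δ) :
    |mutInfo (jointDist Φ Q α (m + k)) - mutInfo (jointDist Φ Q β (m + k))| ≤
      2 * (m * log (Fintype.card Y)) +
        2 * (2 * δ * ((m + k) * (log (Fintype.card X) + log (Fintype.card Y))) + 1) := by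
  have hdist : ∀ {ρ : Matrix (Fin d) (Fin d) ℂ}, ρ.PosSemidef → ρ.trace = 1 →
      (∀ x b, 0 ≤ jointDist Φ Q ρ (m + k) x (Fin.appendEquiv m k b)) ∧
      ∀ x, ∑ b, jointDist Φ Q ρ (m + k) x (Fin.appendEquiv m k b) = ∏ ℓ, Q (x ℓ) :=
    fun hρ hρ1 => ⟨fun x b => jointDist_nonneg hpos hQ hρ x _,
      fun x => ((Fin.appendEquiv m k).sum_comp _).trans (sum_jointDist htr hρ1 x)⟩
  obtain ⟨hαpos, hαmarg⟩ := hdist hα hα1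
  obtain ⟨hβpos, hβmarg⟩ := hdist hβ hβ1
  rw [← mutInfo_comp_equiv (jointDist Φ Q α (m + k)) (Fin.appendEquiv m k),
    ← mutInfo_comp_equiv (jointDist Φ Q β (m + k)) (Fin.appendEquiv m k)]
  refine (abs_mutInfo_sub_le_of_marginal _ _
    hαpos (by simp only [hαmarg, sum_prod_eq_one hQ1])
    hβpos (by simp only [hβmarg, sum_prod_eq_one hQ1])
    (by simp only [hαmarg, hβmarg, implies_true])).trans ?_
  have hTV := sum_abs_sum_jointDist_append_sub_le (k := k) hpos htr hQ hQ1 hα hβ hδ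
  simp only [Fintype.card_fun, Fintype.card_fin, Nat.cast_pow, log_pow]
  have hX := log_natCast_nonneg (Fintype.card X)
  have hY := log_natCast_nonneg (Fintype.card Y)
  have hlog : ((m + k : ℕ) : ℝ) * log (Fintype.card X) + k * log (Fintype.card Y) ≤
      (m + k) * (log (Fintype.card X) + log (Fintype.card Y)) := by
    push_cast
    nlinarith [mul_nonneg (Nat.cast_nonneg' m) hY]
  gcongr 2 * _ + 2 * (?_ + 1)
  exact mul_le_mul hTV hlog (by positivity) ((by positivity : (0 : ℝ) ≤ _).trans hTV)

end MainEstimate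

lemma tendsto_zero_of_abs_le_div_add {f : ℕ → ℝ} (K : ℝ)
    (h : ∀ η > 0, ∃ C : ℝ, ∀ᶠ n : ℕ in Filter.atTop, |f n| ≤ C / n + K * η) :
    Filter.Tendsto f Filter.atTop (nhds 0) := by
  refine Metric.tendsto_nhds.2 fun ε hε => ?_
  have hK : 0 < 2 * (|K| + 1) := by positivity
  obtain ⟨C, hC⟩ := h (ε / (2 * (|K| + 1))) (by positivity)
  have hKη : K * (ε / (2 * (|K| + 1))) < ε / 2 := by
    rw [mul_div_assoc', div_lt_div_iff₀ hK two_pos]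
    nlinarith [le_abs_self K]
  filter_upwards [hC, (tendsto_const_div_atTop_nhds_zero_nat C).eventually
    (gt_mem_nhds (half_pos hε))] with n hn hCn
  rw [Real.dist_0_eq_abs]
  linarith

theorem stmt18_general {X Y : Type} [Fintype X] [Fintype Y]
    (d : ℕ) (κ : X → Y → Type) [∀ x y, Fintype (κ x y)]
    (Fk : ∀ (x : X) (y : Y), κ x y → Matrix (Fin d) (Fin d) ℂ)
    (hnorm : ∀ x : X, ∑ y : Y, ∑ k : κ x y, (Fk x y k)ᴴ * Fk x y k = 1)
    (Q : X → ℝ) (hQ0 : ∀ x, 0 ≤ Q x) (hQ1 : ∑ x : X, Q x = 1)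
    (hind : ∀ α0 β0 : Matrix (Fin d) (Fin d) ℂ,
      α0.PosSemidef → α0.trace = 1 → β0.PosSemidef → β0.trace = 1 →
      ∀ ε : ℝ, 0 < ε → ∃ N : ℕ, ∀ n : ℕ, N ≤ n → ∀ x : Fin n → X,
        trNorm
          ((∑ y : Fin n → Y,
              evolve (fun x' y' ρ' => ∑ k : κ x' y', Fk x' y' k * ρ' * (Fk x' y' k)ᴴ)
                α0 n x y)
            - ∑ y : Fin n → Y,
                evolve (fun x' y' ρ' => ∑ k : κ x' y', Fk x' y' k * ρ' * (Fk x' y' k)ᴴ)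
                  β0 n x y) < ε) :
    ∀ α0 β0 : Matrix (Fin d) (Fin d) ℂ,
      α0.PosSemidef → α0.trace = 1 → β0.PosSemidef → β0.trace = 1 →
      Filter.Tendsto
        (fun n : ℕ =>
          (1 / (n : ℝ)) * mutInfo (fun (x : Fin n → X) (y : Fin n → Y) =>
            (∏ ℓ : Fin n, Q (x ℓ)) *
              ((evolve (fun x' y' ρ' => ∑ k : κ x' y', Fk x' y' k * ρ' * (Fk x' y' k)ᴴ)
                  α0 n x y).trace).re)
          - (1 / (n : ℝ)) * mutInfo (fun (x : Fin n → X) (y : Fin n → Y) =>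
              (∏ ℓ : Fin n, Q (x ℓ)) *
                ((evolve (fun x' y' ρ' => ∑ k : κ x' y', Fk x' y' k * ρ' * (Fk x' y' k)ᴴ)
                    β0 n x y).trace).re))
        Filter.atTop (nhds 0) := by
  intro α0 β0 hα hα1 hβ hβ1
  let Φ : X → Y → Matrix (Fin d) (Fin d) ℂ →+ Matrix (Fin d) (Fin d) ℂ :=
    fun x y => krausMap (Fk x y)
  have hpos : ∀ x y ρ, ρ.PosSemidef → (Φ x y ρ).PosSemidef := fun _ _ _ =>
    krausMap_posSemidef _
  have htr : ∀ x ρ, ∑ y, (Φ x y ρ).trace = ρ.trace := fun x => sum_trace_krausMap _ (hnorm x)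
  refine tendsto_zero_of_abs_le_div_add (4 * (log (Fintype.card X) + log (Fintype.card Y)))
    fun η hη => ?_
  obtain ⟨m, hm⟩ := hind α0 β0 hα hα1 hβ hβ1 η hη
  refine ⟨2 * (m * log (Fintype.card Y)) + 2, Filter.eventually_atTop.2 ⟨m + 1, fun n hn => ?_⟩⟩
  obtain ⟨k, rfl⟩ := Nat.exists_eq_add_of_le (Nat.le_of_succ_le hn)
  have hbound := abs_mutInfo_jointDist_sub_le hpos htr hQ0 hQ1 hα hα1 hβ hβ1 (k := k)
    fun x => (hm m le_rfl x).le
  have hn0 : (0 : ℝ) < (m + k : ℕ) := by exact_mod_cast Nat.zero_lt_of_lt hn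
  -- `krausMap` unfolds to the Kraus sums of the statement
  change |1 / ((m + k : ℕ) : ℝ) * mutInfo (jointDist Φ Q α0 (m + k)) -
    1 / ((m + k : ℕ) : ℝ) * mutInfo (jointDist Φ Q β0 (m + k))| ≤ _
  rw [← mul_sub, abs_mul, abs_of_pos (one_div_pos.2 hn0), one_div_mul_eq_div, div_le_iff₀ hn0,
    add_mul, div_mul_cancel₀ _ hn0.ne']
  push_cast at hbound ⊢
  linarith

/-- The information rate of an indecomposable CC-QSC with an i.i.d. input process is
asymptotically independent of the initial density operator: for any two initial density
matrices `α₀, β₀`, the difference of the normalized mutual informations `I⁽ⁿ⁾(α₀) − I⁽ⁿ⁾(β₀)`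
tends to `0` as `n → ∞`. -/
theorem stmt18 {X Y : Type} [Fintype X] [Fintype Y] [DecidableEq X] [DecidableEq Y]
    (d : ℕ) (κ : X → Y → Type) [∀ x y, Fintype (κ x y)]
    (Fk : ∀ (x : X) (y : Y), κ x y → Matrix (Fin d) (Fin d) ℂ)
    (hnorm : ∀ x : X, ∑ y : Y, ∑ k : κ x y, (Fk x y k)ᴴ * Fk x y k = 1)
    (Q : X → ℝ) (hQ0 : ∀ x, 0 ≤ Q x) (hQ1 : ∑ x : X, Q x = 1)
    (hind : ∀ α0 β0 : Matrix (Fin d) (Fin d) ℂ,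
      α0.PosSemidef → α0.trace = 1 → β0.PosSemidef → β0.trace = 1 →
      ∀ ε : ℝ, 0 < ε → ∃ N : ℕ, ∀ n : ℕ, N ≤ n → ∀ x : Fin n → X,
        trNorm
          ((∑ y : Fin n → Y,
              evolve (fun x' y' ρ' => ∑ k : κ x' y', Fk x' y' k * ρ' * (Fk x' y' k)ᴴ)
                α0 n x y)
            - ∑ y : Fin n → Y,
                evolve (fun x' y' ρ' => ∑ k : κ x' y', Fk x' y' k * ρ' * (Fk x' y' k)ᴴ)
                  β0 n x y) < ε) :
    ∀ α0 β0 : Matrix (Fin d) (Fin d) ℂ,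
      α0.PosSemidef → α0.trace = 1 → β0.PosSemidef → β0.trace = 1 →
      Filter.Tendsto
        (fun n : ℕ =>
          (1 / (n : ℝ)) * mutInfo (fun (x : Fin n → X) (y : Fin n → Y) =>
            (∏ ℓ : Fin n, Q (x ℓ)) *
              ((evolve (fun x' y' ρ' => ∑ k : κ x' y', Fk x' y' k * ρ' * (Fk x' y' k)ᴴ)
                  α0 n x y).trace).re)
          - (1 / (n : ℝ)) * mutInfo (fun (x : Fin n → X) (y : Fin n → Y) =>
              (∏ ℓ : Fin n, Q (x ℓ)) *
                ((evolve (fun x' y' ρ' => ∑ k : κ x' y', Fk x' y' k * ρ' * (Fk x' y' k)ᴴ)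
                    β0 n x y).trace).re))
        Filter.atTop (nhds 0) :=
  stmt18_general d κ Fk hnorm Q hQ0 hQ1 hind
end
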